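/- arXiv:2106.03531 — 6 statements merged into one kernel-verified Lean document; each statement's English description precedes it below -/
import Mathlib

section
/- If a graph G is interval colorable, then its chromatic index equals its maximum degree, i.e., χ'(G) = Δ(G). -/
open SimpleGraph

variable {V : Type*}

/-- A proper edge coloring: distinct edges sharing a vertex get distinct colors. -/
def IsProperEdgeColoring (G : SimpleGraph V) (c : Sym2 V → ℕ) : Prop :=
  ∀ e₁ ∈ G.edgeSet, ∀ e₂ ∈ G.edgeSet, e₁ ≠ e₂ → (∃ v, v ∈ e₁ ∧ v ∈ e₂) → c e₁ ≠ c e₂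

/-- The set of colors appearing on edges incident to `v`. -/
def colorsAt (G : SimpleGraph V) (c : Sym2 V → ℕ) (v : V) : Set ℕ :=
  {n | ∃ e ∈ G.edgeSet, v ∈ e ∧ c e = n}

/-- An interval coloring: a proper edge coloring with positive integer colors such that
the set of colors at each vertex is an interval of integers. -/
def IsIntervalColoring (G : SimpleGraph V) (c : Sym2 V → ℕ) : Prop :=
  IsProperEdgeColoring G c ∧ (∀ e ∈ G.edgeSet, 1 ≤ c e) ∧
    ∀ v, ∀ a ∈ colorsAt G c v, ∀ b ∈ colorsAt G c v, ∀ k, a ≤ k → k ≤ b →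
      k ∈ colorsAt G c v

def IntervalColorable (G : SimpleGraph V) : Prop :=
  ∃ c, IsIntervalColoring G c

/-- The chromatic index: least `t` admitting a proper edge coloring with colors in `{1,…,t}`. -/
noncomputable def chromIndex (G : SimpleGraph V) : ℕ :=
  sInf {t | ∃ c, IsProperEdgeColoring G c ∧ ∀ e ∈ G.edgeSet, c e ∈ Finset.Icc 1 t}

/-- A decomposition of `G` into `k` edge-disjoint interval colorable subgraphs. -/
def IntervalDecomposition (G : SimpleGraph V) (k : ℕ) : Prop :=
  ∃ H : Fin k → SimpleGraph V, (∀ i, H i ≤ G) ∧ (∀ i, IntervalColorable (H i)) ∧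
    ∀ e ∈ G.edgeSet, ∃! i, e ∈ (H i).edgeSet

/-- The interval coloring thickness of `G`. -/
noncomputable def intervalThickness (G : SimpleGraph V) : ℕ :=
  sInf {k | IntervalDecomposition G k}

/-!
An interval coloring `c` is proper, so at a vertex `v` the `deg v` incident edges carry `deg v`
distinct colors; these form an interval, so any two of them differ by less than `deg v ≤ Δ`.
Hence reducing colors modulo `Δ` keeps the coloring proper, and `e ↦ c e % Δ + 1` is a proper
edge coloring with colors in `{1, …, Δ}`. Conversely every proper edge coloring needs at least
`deg v` colors at each vertex `v`.
-/

namespace SimpleGraph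

variable {G : SimpleGraph V}

theorem ncard_incidenceSet (v : V) [Fintype (G.neighborSet v)] :
    (G.incidenceSet v).ncard = G.degree v := by
  classical
  rw [← Nat.card_coe_set_eq, Nat.card_congr (G.incidenceSetEquivNeighborSet v),
    Nat.card_eq_fintype_card, card_neighborSet_eq_degree]

theorem finite_incidenceSet (v : V) [Fintype (G.neighborSet v)] : (G.incidenceSet v).Finite := by
  classical
  exact Set.toFinite _

theorem maxDegree_pos_of_mem_edgeSet [Fintype V] [DecidableRel G.Adj] {e : Sym2 V}
    (he : e ∈ G.edgeSet) : 0 < G.maxDegree := by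
  refine Nat.pos_of_ne_zero fun h0 => ?_
  rw [maxDegree_eq_zero_iff] at h0
  simp [h0] at he

end SimpleGraph

section EdgeColoring

variable {G : SimpleGraph V} {c : Sym2 V → ℕ} {v : V}

theorem colorsAt_eq_image : colorsAt G c v = c '' G.incidenceSet v := by
  ext n
  simp [colorsAt, incidenceSet, and_assoc]

theorem finite_colorsAt [Fintype (G.neighborSet v)] : (colorsAt G c v).Finite := by
  rw [colorsAt_eq_image]
  exact (G.finite_incidenceSet v).image c

theorem IsProperEdgeColoring.injOn_incidenceSet (hc : IsProperEdgeColoring G c) (v : V) :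
    Set.InjOn c (G.incidenceSet v) := by
  intro e₁ he₁ e₂ he₂ hce
  by_contra hne
  exact hc e₁ he₁.1 e₂ he₂.1 hne ⟨v, he₁.2, he₂.2⟩ hce

theorem IsProperEdgeColoring.ncard_colorsAt (hc : IsProperEdgeColoring G c) (v : V)
    [Fintype (G.neighborSet v)] : (colorsAt G c v).ncard = G.degree v := by
  rw [colorsAt_eq_image, (hc.injOn_incidenceSet v).ncard_image,
    G.ncard_incidenceSet v]

theorem IsProperEdgeColoring.degree_le (hc : IsProperEdgeColoring G c) {s : Finset ℕ}
    (hs : ∀ e ∈ G.edgeSet, c e ∈ s) (v : V) [Fintype (G.neighborSet v)] :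
    G.degree v ≤ s.card := by
  rw [← hc.ncard_colorsAt v, ← Set.ncard_coe_finset]
  refine Set.ncard_le_ncard ?_ s.finite_toSet
  rintro _ ⟨e, he, -, rfl⟩
  exact hs e he

theorem IsProperEdgeColoring.maxDegree_le [Fintype V] [DecidableRel G.Adj]
    (hc : IsProperEdgeColoring G c) {s : Finset ℕ} (hs : ∀ e ∈ G.edgeSet, c e ∈ s) :
    G.maxDegree ≤ s.card :=
  G.maxDegree_le_of_forall_degree_le _ fun v => hc.degree_le hs v

theorem IsProperEdgeColoring.mod_add_one (hc : IsProperEdgeColoring G c) {n : ℕ}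
    (hspan : ∀ v, ∀ a ∈ colorsAt G c v, ∀ b ∈ colorsAt G c v, a ≤ b → b < a + n) :
    IsProperEdgeColoring G (fun e => c e % n + 1) := by
  have eq_of_mod_eq : ∀ e₁ ∈ G.edgeSet, ∀ e₂ ∈ G.edgeSet, ∀ v ∈ e₁, v ∈ e₂ →
      c e₁ ≤ c e₂ → c e₁ % n = c e₂ % n → c e₁ = c e₂ := by
    intro e₁ he₁ e₂ he₂ v hv₁ hv₂ hle hmod
    have hlt := hspan v _ ⟨e₁, he₁, hv₁, rfl⟩ _ ⟨e₂, he₂, hv₂, rfl⟩ hle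
    exact Nat.mod_injOn_Ico (c e₁) n (by simp only [Finset.coe_Ico, Set.mem_Ico]; omega)
      (by simp only [Finset.coe_Ico, Set.mem_Ico]; omega) hmod
  intro e₁ he₁ e₂ he₂ hne ⟨v, hv₁, hv₂⟩ hmod
  replace hmod : c e₁ % n = c e₂ % n := Nat.add_right_cancel hmod
  refine hc e₁ he₁ e₂ he₂ hne ⟨v, hv₁, hv₂⟩ ?_
  rcases le_total (c e₁) (c e₂) with hle | hle
  · exact eq_of_mod_eq e₁ he₁ e₂ he₂ v hv₁ hv₂ hle hmod
  · exact (eq_of_mod_eq e₂ he₂ e₁ he₁ v hv₂ hv₁ hle hmod.symm).symm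

theorem IsIntervalColoring.lt_add_degree (hc : IsIntervalColoring G c)
    [Fintype (G.neighborSet v)] {a b : ℕ} (ha : a ∈ colorsAt G c v) (hb : b ∈ colorsAt G c v)
    (hab : a ≤ b) : b < a + G.degree v := by
  have hIcc : (Set.Icc a b).ncard ≤ (colorsAt G c v).ncard :=
    Set.ncard_le_ncard (fun k hk => hc.2.2 v a ha b hb k hk.1 hk.2) finite_colorsAt
  rw [hc.1.ncard_colorsAt v, Set.ncard_eq_toFinset_card', Set.toFinset_Icc, Nat.card_Icc] at hIcc
  omega

end EdgeColoring

theorem chromIndex_eq_maxDegree_of_intervalColorable_general [Fintype V]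
    (G : SimpleGraph V) [DecidableRel G.Adj] (h : IntervalColorable G) :
    chromIndex G = G.maxDegree := by
  obtain ⟨c, hc⟩ := h
  have hspan : ∀ v, ∀ a ∈ colorsAt G c v, ∀ b ∈ colorsAt G c v, a ≤ b → b < a + G.maxDegree :=
    fun v _ ha _ hb hab => (hc.lt_add_degree ha hb hab).trans_le <|
      Nat.add_le_add_left (G.degree_le_maxDegree v) _
  have hmem : G.maxDegree ∈
      {t | ∃ c, IsProperEdgeColoring G c ∧ ∀ e ∈ G.edgeSet, c e ∈ Finset.Icc 1 t} :=
    ⟨_, hc.1.mod_add_one hspan, fun e he =>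
      Finset.mem_Icc.2 ⟨le_add_self, Nat.mod_lt _ (G.maxDegree_pos_of_mem_edgeSet he)⟩⟩
  refine le_antisymm (Nat.sInf_le hmem) (le_csInf ⟨_, hmem⟩ ?_)
  rintro t ⟨c', hc', hbound⟩
  simpa using hc'.maxDegree_le hbound

theorem chromIndex_eq_maxDegree_of_intervalColorable [Fintype V] [DecidableEq V]
    (G : SimpleGraph V) [DecidableRel G.Adj] (h : IntervalColorable G) :
    chromIndex G = G.maxDegree :=
  chromIndex_eq_maxDegree_of_intervalColorable_general G h
end

section
/- If H is an interval colorable graph with a vertex v of degree 1 in H, and G is obtained from H by adding a cycle C that intersects H exactly in the vertex v, then G is interval colorable. -/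
open SimpleGraph

variable {V : Type*}

/-- The graph obtained from `H` by attaching a cycle of length `n + 3` which meets `H`
exactly in the vertex `u` (the cycle is `u, c₀, c₁, …, c_{n+1}, u` on `n + 2` new
vertices). -/
def attachCycle (H : SimpleGraph V) (u : V) (n : ℕ) : SimpleGraph (V ⊕ Fin (n + 2)) :=
  SimpleGraph.fromEdgeSet
    ((Sym2.map Sum.inl '' H.edgeSet) ∪
      {s(Sum.inl u, Sum.inr 0), s(Sum.inl u, Sum.inr (Fin.last (n + 1)))} ∪
      {e | ∃ i : Fin (n + 1), e = s(Sum.inr i.castSucc, Sum.inr i.succ)})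

/-!
Raise every color of `H` by one, so that the only edge `u w` of `H` at `u` gets a color `t ≥ 2`.
On the cycle `u, c₀, …, c_{n+1}, u` give `u c₀` the color `t + 1`, give the path edge
`c_i c_{i+1}` the color `t + i % 2`, and give the closing edge `c_{n+1} u` the color `t - 1` if
`n` is even and `t + 2` if `n` is odd: it differs by one from the color `t + n % 2` of the last
path edge and extends `{t, t + 1}` to an interval at `u`. Then `u` sees three consecutive colors,
every `c_j` two consecutive colors, and every other vertex the same colors as in `H`.
-/

section EdgeColoring

variable {G : SimpleGraph V} {c : Sym2 V → ℕ}

lemma mem_colorsAt {v : V} {k : ℕ} : k ∈ colorsAt G c v ↔ ∃ w, G.Adj v w ∧ c s(v, w) = k := by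
  constructor
  · rintro ⟨e, he, hv, rfl⟩
    exact ⟨Sym2.Mem.other hv, by rwa [← mem_edgeSet, Sym2.other_spec], by rw [Sym2.other_spec]⟩
  · rintro ⟨w, hw, rfl⟩
    exact ⟨s(v, w), hw, Sym2.mem_mk_left v w, rfl⟩

lemma isProperEdgeColoring_iff : IsProperEdgeColoring G c ↔
    ∀ ⦃v w w'⦄, G.Adj v w → G.Adj v w' → c s(v, w) = c s(v, w') → w = w' := by
  constructor
  · intro h v w w' hw hw' hc
    by_contra hne
    exact h _ hw _ hw' (Sym2.congr_right.not.mpr hne)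
      ⟨v, Sym2.mem_mk_left _ _, Sym2.mem_mk_left _ _⟩ hc
  · rintro h e₁ he₁ e₂ he₂ hne ⟨v, hv₁, hv₂⟩ hc
    obtain ⟨w, rfl⟩ : ∃ w, e₁ = s(v, w) := ⟨_, (Sym2.other_spec hv₁).symm⟩
    obtain ⟨w', rfl⟩ : ∃ w', e₂ = s(v, w') := ⟨_, (Sym2.other_spec hv₂).symm⟩
    exact hne (Sym2.congr_right.mpr (h he₁ he₂ hc))

lemma isIntervalColoring_iff : IsIntervalColoring G c ↔ IsProperEdgeColoring G c ∧
    (∀ ⦃v w⦄, G.Adj v w → 1 ≤ c s(v, w)) ∧ ∀ v, (colorsAt G c v).OrdConnected := by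
  refine and_congr_right fun _ ↦ and_congr ⟨fun h v w hw ↦ h _ hw, fun h e he ↦ ?_⟩ ?_
  · induction e using Sym2.ind with | _ v w => exact h he
  · simp only [Set.ordConnected_def, Set.subset_def, Set.mem_Icc, and_imp]

lemma Set.ordConnected_of_forall_le_add_one {S : Set ℕ} (h : ∀ a ∈ S, ∀ b ∈ S, a ≤ b + 1) :
    S.OrdConnected := by
  refine ⟨fun a ha b hb k ⟨hak, hkb⟩ ↦ ?_⟩
  obtain rfl | rfl : k = a ∨ k = b := by have := h b hb a ha; omega
  exacts [ha, hb]

lemma IsIntervalColoring.add_const (hc : IsIntervalColoring G c) (k : ℕ) :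
    IsIntervalColoring G (c · + k) := by
  obtain ⟨hproper, hpos, hint⟩ := hc
  refine ⟨fun e₁ h₁ e₂ h₂ hne hv ↦ by simpa using hproper e₁ h₁ e₂ h₂ hne hv,
    fun e he ↦ (hpos e he).trans (Nat.le_add_right _ _), ?_⟩
  rintro v _ ⟨e₁, h₁, hv₁, rfl⟩ _ ⟨e₂, h₂, hv₂, rfl⟩ m hm₁ hm₂
  dsimp only at hm₁ hm₂
  obtain ⟨e, he, hv, hce⟩ :=
    hint v _ ⟨e₁, h₁, hv₁, rfl⟩ _ ⟨e₂, h₂, hv₂, rfl⟩ (m - k) (by omega) (by omega)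
  exact ⟨e, he, hv, show c e + k = m by omega⟩

end EdgeColoring

section AttachCycle

variable {H : SimpleGraph V} {u : V} {n : ℕ}

@[simp] lemma attachCycle_adj_inl_inl {a b : V} :
    (attachCycle H u n).Adj (.inl a) (.inl b) ↔ H.Adj a b := by
  simpa [attachCycle, Sym2.exists, and_or_left, exists_or, H.adj_comm b a] using
    fun h : H.Adj a b ↦ h.ne

@[simp] lemma attachCycle_adj_inl_inr {a : V} {j : Fin (n + 2)} :
    (attachCycle H u n).Adj (.inl a) (.inr j) ↔ a = u ∧ (j.val = 0 ∨ j.val = n + 1) := by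
  simp [attachCycle, Sym2.exists, and_or_left, Fin.ext_iff (b := Fin.last _)]

@[simp] lemma attachCycle_adj_inr_inl {a : V} {j : Fin (n + 2)} :
    (attachCycle H u n).Adj (.inr j) (.inl a) ↔ a = u ∧ (j.val = 0 ∨ j.val = n + 1) := by
  rw [SimpleGraph.adj_comm, attachCycle_adj_inl_inr]

lemma Fin.exists_castSucc_succ_iff {i j : Fin (n + 1)} :
    (∃ k : Fin n, i = k.castSucc ∧ j = k.succ) ↔ i.val + 1 = j.val := by
  constructor
  · rintro ⟨k, rfl, rfl⟩
    simp
  · exact fun h ↦ ⟨⟨i, by omega⟩, rfl, Fin.ext (by simp [← h])⟩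

@[simp] lemma attachCycle_adj_inr_inr {i j : Fin (n + 2)} :
    (attachCycle H u n).Adj (.inr i) (.inr j) ↔ i.val + 1 = j.val ∨ j.val + 1 = i.val := by
  have hne : i.val + 1 = j.val ∨ j.val + 1 = i.val → i ≠ j := by rintro h rfl; omega
  simpa [attachCycle, Sym2.exists, exists_or, Fin.exists_castSucc_succ_iff,
    and_comm (a := i = Fin.succ _)] using hne

end AttachCycle

section Coloring

def closingColor (t n : ℕ) : ℕ := if n % 2 = 0 then t - 1 else t + 2

lemma closingColor_cases (t n : ℕ) :
    n % 2 = 0 ∧ closingColor t n = t - 1 ∨ n % 2 = 1 ∧ closingColor t n = t + 2 := by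
  unfold closingColor; split_ifs <;> omega

def attachCycleColoring (c : Sym2 V → ℕ) (t n : ℕ) : Sym2 (V ⊕ Fin (n + 2)) → ℕ :=
  Sym2.lift ⟨fun
    | .inl a, .inl b => c s(a, b)
    | .inl _, .inr j | .inr j, .inl _ => if j.val = 0 then t + 1 else closingColor t n
    | .inr i, .inr j => t + min i.val j.val % 2,
    by rintro (a | i) (b | j) <;> simp [Sym2.eq_swap, Nat.min_comm]⟩

variable {c : Sym2 V → ℕ} {t n : ℕ}

@[simp] lemma attachCycleColoring_inl_inl (a b : V) :
    attachCycleColoring c t n s(.inl a, .inl b) = c s(a, b) := rfl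

@[simp] lemma attachCycleColoring_inl_inr (a : V) (j : Fin (n + 2)) :
    attachCycleColoring c t n s(.inl a, .inr j) =
      if j.val = 0 then t + 1 else closingColor t n := rfl

@[simp] lemma attachCycleColoring_inr_inl (a : V) (j : Fin (n + 2)) :
    attachCycleColoring c t n s(.inr j, .inl a) =
      if j.val = 0 then t + 1 else closingColor t n := rfl

@[simp] lemma attachCycleColoring_inr_inr (i j : Fin (n + 2)) :
    attachCycleColoring c t n s(.inr i, .inr j) = t + min i.val j.val % 2 := rfl

variable {H : SimpleGraph V} {u : V}

lemma isProperEdgeColoring_attachCycleColoring (hc : IsProperEdgeColoring H c)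
    (hcu : ∀ x, H.Adj u x → c s(u, x) = t) (ht : 1 ≤ t) :
    IsProperEdgeColoring (attachCycle H u n) (attachCycleColoring c t n) := by
  refine isProperEdgeColoring_iff.mpr ?_
  rintro (a | i) (b | j) (b' | j') hq hq' hcol <;>
    simp only [attachCycle_adj_inl_inl, attachCycle_adj_inl_inr, attachCycle_adj_inr_inl,
      attachCycle_adj_inr_inr, attachCycleColoring_inl_inl, attachCycleColoring_inl_inr,
      attachCycleColoring_inr_inl, attachCycleColoring_inr_inr] at hq hq' hcol
  · exact congrArg _ (isProperEdgeColoring_iff.mp hc hq hq' hcol)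
  · obtain ⟨rfl, -⟩ := hq'
    rw [hcu b hq] at hcol
    rcases closingColor_cases t n with ⟨-, hy⟩ | ⟨-, hy⟩ <;> split_ifs at hcol <;> omega
  · obtain ⟨rfl, -⟩ := hq
    rw [hcu b' hq'] at hcol
    rcases closingColor_cases t n with ⟨-, hy⟩ | ⟨-, hy⟩ <;> split_ifs at hcol <;> omega
  · rw [Sum.inr.injEq, Fin.ext_iff]
    rcases closingColor_cases t n with ⟨-, hy⟩ | ⟨-, hy⟩ <;> split_ifs at hcol <;> omega
  · rw [hq.1, hq'.1]
  all_goals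
    simp only [Sum.inr.injEq, Fin.ext_iff, reduceCtorEq, min_def] at hcol ⊢
    rcases closingColor_cases t n with ⟨_, hy⟩ | ⟨_, hy⟩ <;> split_ifs at hcol <;> omega

lemma attachCycleColoring_pos (hpos : ∀ ⦃a b⦄, H.Adj a b → 1 ≤ c s(a, b)) (ht : 2 ≤ t) :
    ∀ ⦃p q⦄, (attachCycle H u n).Adj p q → 1 ≤ attachCycleColoring c t n s(p, q) := by
  rintro (a | i) (b | j) hpq <;>
    simp only [attachCycle_adj_inl_inl, attachCycle_adj_inl_inr, attachCycle_adj_inr_inl,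
      attachCycle_adj_inr_inr, attachCycleColoring_inl_inl, attachCycleColoring_inl_inr,
      attachCycleColoring_inr_inl, attachCycleColoring_inr_inr] at hpq ⊢
  · exact hpos hpq
  all_goals rcases closingColor_cases t n with ⟨-, hy⟩ | ⟨-, hy⟩ <;> (try split_ifs) <;> omega

lemma colorsAt_attachCycle_inl_of_ne {a : V} (ha : a ≠ u) :
    colorsAt (attachCycle H u n) (attachCycleColoring c t n) (.inl a) = colorsAt H c a := by
  ext k
  simp only [mem_colorsAt]
  constructor
  · rintro ⟨b | j, hab, rfl⟩
    · exact ⟨b, by simpa using hab, rfl⟩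
    · exact absurd (attachCycle_adj_inl_inr.mp hab).1 ha
  · rintro ⟨b, hab, rfl⟩
    exact ⟨.inl b, by simpa using hab, rfl⟩

lemma colorsAt_attachCycle_inl_self {w : V} (huw : H.Adj u w)
    (hcu : ∀ x, H.Adj u x → c s(u, x) = t) :
    colorsAt (attachCycle H u n) (attachCycleColoring c t n) (.inl u) =
      {t, t + 1, closingColor t n} := by
  ext k
  simp only [mem_colorsAt, Set.mem_insert_iff, Set.mem_singleton_iff]
  constructor
  · rintro ⟨b | j, hub, rfl⟩
    · simp [hcu b (attachCycle_adj_inl_inl.mp hub)]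
    · simp only [attachCycleColoring_inl_inr]
      split_ifs <;> simp
  · rintro (rfl | rfl | rfl)
    · exact ⟨.inl w, attachCycle_adj_inl_inl.mpr huw, hcu w huw⟩
    · exact ⟨.inr 0, by simp, by simp⟩
    · exact ⟨.inr (Fin.last _), by simp, by simp⟩

lemma ordConnected_closingColor_triple : ({t, t + 1, closingColor t n} : Set ℕ).OrdConnected := by
  rcases closingColor_cases t n with ⟨-, hy⟩ | ⟨-, hy⟩ <;> rw [hy]
  · convert Set.ordConnected_Icc (a := t - 1) (b := t + 1) using 1
    ext; simp only [Set.mem_insert_iff, Set.mem_singleton_iff, Set.mem_Icc]; omega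
  · convert Set.ordConnected_Icc (a := t) (b := t + 2) using 1
    ext; simp only [Set.mem_insert_iff, Set.mem_singleton_iff, Set.mem_Icc]; omega

lemma ordConnected_colorsAt_attachCycle_inr (ht : 1 ≤ t) (j : Fin (n + 2)) :
    (colorsAt (attachCycle H u n) (attachCycleColoring c t n) (.inr j)).OrdConnected := by
  refine Set.ordConnected_of_forall_le_add_one ?_
  simp only [mem_colorsAt]
  rintro _ ⟨a | i, ha, rfl⟩ _ ⟨b | i', hb, rfl⟩ <;>
    simp only [attachCycle_adj_inr_inl, attachCycle_adj_inr_inr, attachCycleColoring_inr_inl,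
      attachCycleColoring_inr_inr, min_def] at ha hb ⊢ <;>
    rcases closingColor_cases t n with ⟨_, hy⟩ | ⟨_, hy⟩ <;> split_ifs <;> omega

lemma ordConnected_colorsAt_attachCycleColoring (hint : ∀ v, (colorsAt H c v).OrdConnected)
    {w : V} (huw : H.Adj u w) (hcu : ∀ x, H.Adj u x → c s(u, x) = t) (ht : 1 ≤ t) :
    ∀ p, (colorsAt (attachCycle H u n) (attachCycleColoring c t n) p).OrdConnected
  | .inl a => by
    by_cases ha : a = u
    · rw [ha, colorsAt_attachCycle_inl_self huw hcu]
      exact ordConnected_closingColor_triple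
    · rw [colorsAt_attachCycle_inl_of_ne ha]
      exact hint a
  | .inr j => ordConnected_colorsAt_attachCycle_inr ht j

lemma isIntervalColoring_attachCycleColoring (hc : IsIntervalColoring H c) {w : V}
    (huw : H.Adj u w) (hw : ∀ x, H.Adj u x → x = w) (ht : 2 ≤ c s(u, w)) :
    IsIntervalColoring (attachCycle H u n) (attachCycleColoring c (c s(u, w)) n) := by
  obtain ⟨hproper, hpos, hint⟩ := isIntervalColoring_iff.mp hc
  have hcu : ∀ x, H.Adj u x → c s(u, x) = c s(u, w) := fun x hx ↦ by rw [hw x hx]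
  exact isIntervalColoring_iff.mpr
    ⟨isProperEdgeColoring_attachCycleColoring hproper hcu (by omega),
      attachCycleColoring_pos hpos ht,
      ordConnected_colorsAt_attachCycleColoring hint huw hcu (by omega)⟩

end Coloring

theorem intervalColorable_attachCycle_general [Fintype V]
    (H : SimpleGraph V) [DecidableRel H.Adj] (u : V) (hu : H.degree u = 1) (n : ℕ)
    (h : IntervalColorable H) : IntervalColorable (attachCycle H u n) := by
  obtain ⟨w, huw, hw⟩ := degree_eq_one_iff_existsUnique_adj.mp hu
  obtain ⟨c, hc⟩ := h
  exact ⟨_, isIntervalColoring_attachCycleColoring (hc.add_const 1) huw hw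
    (Nat.succ_le_succ (hc.2.1 _ huw))⟩

theorem intervalColorable_attachCycle [Fintype V] [DecidableEq V]
    (H : SimpleGraph V) [DecidableRel H.Adj] (u : V) (hu : H.degree u = 1) (n : ℕ)
    (h : IntervalColorable H) : IntervalColorable (attachCycle H u n) :=
  intervalColorable_attachCycle_general H u hu n h
end

section
/- For any graph G, θ_int(G) ≤ 2·⌈3Δ(G)/10⌉. -/
open SimpleGraph

variable {V : Type*}

/-!
By Vizing's theorem `G` has a proper edge coloring with colors `1, …, Δ + 1`. The edges colored
`2 i + 1` or `2 i + 2` span a subgraph on which subtracting `2 i` gives a proper coloring with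
colors in `{1, 2}`, and such a coloring is an interval coloring. This gives `⌈(Δ + 1) / 2⌉`
interval colorable subgraphs, and `⌈(Δ + 1) / 2⌉ ≤ 2 ⌈3 Δ / 10⌉` as soon as `Δ ≥ 1`.

Vizing's theorem is proved by coloring the edges one at a time. For an uncolored edge `u v`,
grow a Vizing fan `v = f 0, f 1, …` at `u`, where the color of `u (f (i + 1))` is missing at
`f i`. Either a color missing at `u` is also missing at the last fan vertex, and shifting colors
along the fan colors `u v`; or the fan can be extended; or it closes up on itself, and then
swapping two colors on a suitable Kempe chain reduces to the first case.
-/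

open Finset Function

namespace SimpleGraph

section PartialColoring

variable (G : SimpleGraph V)

/-- Color `0` marks an uncolored edge; the genuine colors are `1, …, D + 1`. -/
structure IsPartialEdgeColoring (D : ℕ) (c : Sym2 V → ℕ) : Prop where
  le_succ : ∀ ⦃x y⦄, G.Adj x y → c s(x, y) ≤ D + 1
  proper : ∀ ⦃x a b⦄, G.Adj x a → G.Adj x b → a ≠ b → c s(x, a) ≠ 0 → c s(x, a) ≠ c s(x, b)

def IsMissingColor (D : ℕ) (c : Sym2 V → ℕ) (x : V) (γ : ℕ) : Prop :=
  1 ≤ γ ∧ γ ≤ D + 1 ∧ ∀ y, G.Adj x y → c s(x, y) ≠ γ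

def CanColorEdge (D : ℕ) (c : Sym2 V → ℕ) (e : Sym2 V) : Prop :=
  ∃ c', G.IsPartialEdgeColoring D c' ∧ insert e (Function.support c) ⊆ Function.support c'

variable {G} {D : ℕ} {c c' : Sym2 V → ℕ} {e : Sym2 V} {u w x : V} {γ δ : ℕ}

lemma CanColorEdge.mono (h : G.CanColorEdge D c' e)
    (hsub : Function.support c ⊆ Function.support c') :
    G.CanColorEdge D c e :=
  let ⟨c'', hc'', hsub'⟩ := h
  ⟨c'', hc'', (Set.insert_subset_insert hsub).trans hsub'⟩

lemma exists_isMissingColor [Fintype (G.neighborSet x)] (hx : G.degree x ≤ D) :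
    ∃ γ, G.IsMissingColor D c x γ := by
  have hcard : #((G.neighborFinset x).image fun y => c s(x, y)) < #(Icc 1 (D + 1)) := by
    rw [Nat.card_Icc]
    exact (card_image_le.trans_eq (G.card_neighborFinset_eq_degree x)).trans_lt (by omega)
  obtain ⟨γ, hγ, hγx⟩ := exists_mem_notMem_of_card_lt_card hcard
  simp only [mem_Icc, mem_image, mem_neighborFinset, not_exists, not_and] at hγ hγx
  exact ⟨γ, hγ.1, hγ.2, hγx⟩

lemma isMissingColor_congr (h : ∀ y, G.Adj x y → c' s(x, y) = c s(x, y)) :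
    G.IsMissingColor D c' x γ ↔ G.IsMissingColor D c x γ := by
  unfold IsMissingColor
  constructor <;> rintro ⟨h1, h2, h3⟩ <;> refine ⟨h1, h2, fun y hy => ?_⟩
  · rw [← h y hy]; exact h3 y hy
  · rw [h y hy]; exact h3 y hy

variable [DecidableEq V]

lemma IsPartialEdgeColoring.update (hc : G.IsPartialEdgeColoring D c)
    (hu : G.IsMissingColor D c u γ) (hw : G.IsMissingColor D c w γ) :
    G.IsPartialEdgeColoring D (Function.update c s(u, w) γ) := by
  have hx : ∀ ⦃x y⦄, s(x, y) = s(u, w) → G.IsMissingColor D c x γ := by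
    intro x y h
    rcases Sym2.eq_iff.mp h with ⟨rfl, -⟩ | ⟨rfl, -⟩ <;> assumption
  refine ⟨fun x y hxy => ?_, fun x a b hxa hxb hab ha => ?_⟩
  · rcases eq_or_ne s(x, y) s(u, w) with h | h
    · rw [h, update_self]; exact hu.2.1
    · rw [update_of_ne h]; exact hc.le_succ hxy
  have hne : s(x, a) ≠ s(x, b) := fun h => hab (Sym2.congr_right.mp h)
  by_cases ha' : s(x, a) = s(u, w) <;> by_cases hb' : s(x, b) = s(u, w)
  · exact absurd (ha'.trans hb'.symm) hne
  · rw [ha', update_self, update_of_ne hb']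
    exact ((hx ha').2.2 b hxb).symm
  · rw [update_of_ne ha', hb', update_self]
    exact (hx hb').2.2 a hxa
  · rw [update_of_ne ha'] at ha ⊢
    rw [update_of_ne hb']
    exact hc.proper hxa hxb hab ha

lemma isMissingColor_update_of_ne (hu : x ≠ u) (hw : x ≠ w) :
    G.IsMissingColor D (Function.update c s(u, w) γ) x δ ↔ G.IsMissingColor D c x δ :=
  isMissingColor_congr fun y _ => update_of_ne (fun h => by
    rcases Sym2.eq_iff.mp h with ⟨rfl, -⟩ | ⟨rfl, -⟩ <;> contradiction) _ _

lemma IsPartialEdgeColoring.isMissingColor_update (hc : G.IsPartialEdgeColoring D c)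
    (huw : G.Adj u w) (h0 : c s(u, w) ≠ 0) (hγ : γ ≠ c s(u, w)) :
    G.IsMissingColor D (Function.update c s(u, w) γ) u (c s(u, w)) := by
  refine ⟨Nat.one_le_iff_ne_zero.mpr h0, hc.le_succ huw, fun y hy => ?_⟩
  rcases eq_or_ne y w with rfl | hyw
  · rw [update_self]; exact hγ
  · rw [update_of_ne (fun h => hyw (Sym2.congr_right.mp h))]
    exact (hc.proper huw hy hyw.symm h0).symm

lemma canColorEdge_of_isMissingColor (hc : G.IsPartialEdgeColoring D c)
    (hu : G.IsMissingColor D c u γ) (hw : G.IsMissingColor D c w γ) :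
    G.CanColorEdge D c s(u, w) :=
  ⟨_, hc.update hu hw, (support_update_of_ne_zero c _ (Nat.one_le_iff_ne_zero.mp hu.1)).ge⟩

end PartialColoring

section Kempe

variable (G : SimpleGraph V)

def kempeGraph (c : Sym2 V → ℕ) (α β : ℕ) : SimpleGraph V where
  Adj x y := G.Adj x y ∧ (c s(x, y) = α ∨ c s(x, y) = β)
  symm := ⟨fun x _ h => ⟨h.1.symm, Sym2.eq_swap (a := x) ▸ h.2⟩⟩
  loopless := ⟨fun x h => G.loopless.irrefl x h.1⟩

open Classical in
noncomputable def kempeSwap (c : Sym2 V → ℕ) (α β : ℕ) (r : V) : Sym2 V → ℕ := fun e =>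
  if ∃ x ∈ e, (G.kempeGraph c α β).Reachable r x then Equiv.swap α β (c e) else c e

variable {G} {D : ℕ} {c : Sym2 V → ℕ} {α β γ : ℕ} {r x y : V}

lemma kempeSwap_of_reachable (hx : (G.kempeGraph c α β).Reachable r x) :
    G.kempeSwap c α β r s(x, y) = Equiv.swap α β (c s(x, y)) :=
  if_pos ⟨x, Sym2.mem_mk_left x y, hx⟩

lemma kempeSwap_of_not_reachable (hxy : G.Adj x y) (hx : ¬ (G.kempeGraph c α β).Reachable r x) :
    G.kempeSwap c α β r s(x, y) = c s(x, y) := by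
  unfold kempeSwap
  split_ifs with h
  · obtain ⟨z, hz, hrz⟩ := h
    rcases Sym2.mem_iff.mp hz with rfl | rfl
    · exact absurd hrz hx
    · refine Equiv.swap_apply_of_ne_of_ne (fun h => hx ?_) (fun h => hx ?_) <;>
        exact hrz.trans (Adj.reachable ⟨hxy.symm, by rw [Sym2.eq_swap]; tauto⟩)
  · rfl

lemma support_kempeSwap (hα : α ≠ 0) (hβ : β ≠ 0) :
    Function.support (G.kempeSwap c α β r) = Function.support c := by
  ext e
  simp only [Function.mem_support, kempeSwap]
  split_ifs
  · rw [Ne, Equiv.swap_apply_eq_iff, Equiv.swap_apply_of_ne_of_ne hα.symm hβ.symm]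
  · rfl

lemma IsPartialEdgeColoring.kempeSwap (hc : G.IsPartialEdgeColoring D c)
    (hα0 : α ≠ 0) (hβ0 : β ≠ 0) (hα : α ≤ D + 1) (hβ : β ≤ D + 1) :
    G.IsPartialEdgeColoring D (G.kempeSwap c α β r) := by
  refine ⟨fun x y hxy => ?_, fun x a b hxa hxb hab ha => ?_⟩
  · by_cases hx : (G.kempeGraph c α β).Reachable r x
    · rw [kempeSwap_of_reachable hx, Equiv.swap_apply_def]
      have := hc.le_succ hxy
      split_ifs <;> omega
    · rw [kempeSwap_of_not_reachable hxy hx]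
      exact hc.le_succ hxy
  · by_cases hx : (G.kempeGraph c α β).Reachable r x
    · rw [kempeSwap_of_reachable hx, Ne, Equiv.swap_apply_eq_iff,
        Equiv.swap_apply_of_ne_of_ne hα0.symm hβ0.symm] at ha
      rw [kempeSwap_of_reachable hx, kempeSwap_of_reachable hx, Ne,
        (Equiv.swap α β).apply_eq_iff_eq]
      exact hc.proper hxa hxb hab ha
    · rw [kempeSwap_of_not_reachable hxa hx] at ha ⊢
      rw [kempeSwap_of_not_reachable hxb hx]
      exact hc.proper hxa hxb hab ha

lemma isMissingColor_kempeSwap_of_not_reachable (hx : ¬ (G.kempeGraph c α β).Reachable r x) :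
    G.IsMissingColor D (G.kempeSwap c α β r) x γ ↔ G.IsMissingColor D c x γ :=
  isMissingColor_congr fun _ hy => kempeSwap_of_not_reachable hy hx

lemma isMissingColor_kempeSwap_of_ne (hα : γ ≠ α) (hβ : γ ≠ β) :
    G.IsMissingColor D (G.kempeSwap c α β r) x γ ↔ G.IsMissingColor D c x γ := by
  by_cases hx : (G.kempeGraph c α β).Reachable r x
  · unfold IsMissingColor
    simp only [kempeSwap_of_reachable hx, Ne, Equiv.swap_apply_eq_iff,
      Equiv.swap_apply_of_ne_of_ne hα hβ]
  · exact isMissingColor_kempeSwap_of_not_reachable hx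

lemma IsMissingColor.kempeSwap (hβ : G.IsMissingColor D c x β)
    (hx : (G.kempeGraph c α β).Reachable r x) (hα1 : 1 ≤ α) (hα : α ≤ D + 1) :
    G.IsMissingColor D (G.kempeSwap c α β r) x α := by
  refine ⟨hα1, hα, fun y hy => ?_⟩
  rw [kempeSwap_of_reachable hx, Ne, Equiv.swap_apply_eq_iff, Equiv.swap_apply_left]
  exact hβ.2.2 y hy

end Kempe

section DegreeTwo

variable {K : SimpleGraph V}

/-- Both paths are forced along the same route: leaving a vertex, there is at most one
neighbour other than the one just left. -/
lemma eq_of_isPath_of_adj_notMem_support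
    (hK : ∀ x y₁ y₂ y₃, K.Adj x y₁ → K.Adj x y₂ → K.Adj x y₃ → y₁ = y₂ ∨ y₁ = y₃ ∨ y₂ = y₃)
    {t w a b : V} (p : K.Walk w a) (q : K.Walk w b) (hp : p.IsPath) (hq : q.IsPath)
    (htw : K.Adj t w) (htp : t ∉ p.support) (htq : t ∉ q.support)
    (ha : (K.neighborSet a).Subsingleton) (hb : (K.neighborSet b).Subsingleton) : a = b := by
  induction p generalizing t with
  | nil =>
    cases q with
    | nil => rfl
    | cons hadj q =>
      exact absurd (Walk.support_cons _ _ ▸ List.mem_cons_of_mem _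
        (ha hadj htw.symm ▸ q.start_mem_support)) htq
  | cons hadj p ih =>
    cases q with
    | nil =>
      exact absurd (Walk.support_cons _ _ ▸ List.mem_cons_of_mem _
        (hb hadj htw.symm ▸ p.start_mem_support)) htp
    | cons hadj' q =>
      rw [Walk.cons_isPath_iff] at hp hq
      rcases hK _ _ _ _ htw.symm hadj hadj' with rfl | rfl | rfl
      · exact absurd (List.mem_cons_of_mem _ p.start_mem_support) htp
      · exact absurd (List.mem_cons_of_mem _ q.start_mem_support) htq
      · exact ih q hp.1 hq.1 hadj hp.2 hq.2 ha

lemma eq_of_reachable_of_neighborSet_subsingleton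
    (hK : ∀ x y₁ y₂ y₃, K.Adj x y₁ → K.Adj x y₂ → K.Adj x y₃ → y₁ = y₂ ∨ y₁ = y₃ ∨ y₂ = y₃)
    {u a b : V} (hu : (K.neighborSet u).Subsingleton) (ha : (K.neighborSet a).Subsingleton)
    (hb : (K.neighborSet b).Subsingleton) (hau : a ≠ u) (hbu : b ≠ u)
    (hra : K.Reachable u a) (hrb : K.Reachable u b) : a = b := by
  classical
  obtain ⟨p, hp⟩ := hra.some.toPath
  obtain ⟨q, hq⟩ := hrb.some.toPath
  cases p with
  | nil => exact absurd rfl hau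
  | cons hadj p =>
    cases q with
    | nil => exact absurd rfl hbu
    | cons hadj' q =>
      obtain rfl := hu hadj hadj'
      rw [Walk.cons_isPath_iff] at hp hq
      exact eq_of_isPath_of_adj_notMem_support hK p q hp.1 hq.1 hadj hp.2 hq.2 ha hb

end DegreeTwo

section KempeChain

variable {G : SimpleGraph V} {D : ℕ} {c : Sym2 V → ℕ} {α β : ℕ}

lemma IsPartialEdgeColoring.eq_of_kempeGraph_adj (hc : G.IsPartialEdgeColoring D c)
    (hα : α ≠ 0) (hβ : β ≠ 0) {x y y' : V} (hy : (G.kempeGraph c α β).Adj x y)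
    (hy' : (G.kempeGraph c α β).Adj x y') (h : c s(x, y) = c s(x, y')) : y = y' := by
  by_contra hne
  exact hc.proper hy.1 hy'.1 hne (by rcases hy.2 with h | h <;> rw [h] <;> assumption) h

/-- An `α`/`β`-Kempe chain is a path or a cycle, and a vertex missing `α` or `β` is an end of it. -/
lemma IsPartialEdgeColoring.eq_of_reachable_kempeGraph (hc : G.IsPartialEdgeColoring D c)
    {u a b : V} (hu : G.IsMissingColor D c u α) (ha : G.IsMissingColor D c a β)
    (hb : G.IsMissingColor D c b β) (hau : a ≠ u) (hbu : b ≠ u)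
    (hra : (G.kempeGraph c α β).Reachable u a) (hrb : (G.kempeGraph c α β).Reachable u b) :
    a = b := by
  have hα : α ≠ 0 := Nat.one_le_iff_ne_zero.mp hu.1
  have hβ : β ≠ 0 := Nat.one_le_iff_ne_zero.mp ha.1
  have hdeg : ∀ x y₁ y₂ y₃, (G.kempeGraph c α β).Adj x y₁ → (G.kempeGraph c α β).Adj x y₂ →
      (G.kempeGraph c α β).Adj x y₃ → y₁ = y₂ ∨ y₁ = y₃ ∨ y₂ = y₃ := by
    intro x y₁ y₂ y₃ h₁ h₂ h₃
    by_contra! hne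
    have h₁₂ := mt (hc.eq_of_kempeGraph_adj hα hβ h₁ h₂) hne.1
    have h₁₃ := mt (hc.eq_of_kempeGraph_adj hα hβ h₁ h₃) hne.2.1
    have h₂₃ := mt (hc.eq_of_kempeGraph_adj hα hβ h₂ h₃) hne.2.2
    rcases h₁.2 with h₁ | h₁ <;> rcases h₂.2 with h₂ | h₂ <;> rcases h₃.2 with h₃ | h₃ <;> omega
  have hend : ∀ {x} {γ}, G.IsMissingColor D c x γ → (γ = α ∨ γ = β) →
      ((G.kempeGraph c α β).neighborSet x).Subsingleton := by
    intro x γ hx hγ y hy y' hy'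
    refine hc.eq_of_kempeGraph_adj hα hβ hy hy' ?_
    have := hx.2.2 y hy.1
    have := hx.2.2 y' hy'.1
    rcases hy.2 with h | h <;> rcases hy'.2 with h' | h' <;> omega
  exact eq_of_reachable_of_neighborSet_subsingleton hdeg (hend hu (.inl rfl))
    (hend ha (.inr rfl)) (hend hb (.inr rfl)) hau hbu hra hrb

end KempeChain

section Fan

variable (G : SimpleGraph V)

structure IsFan (D : ℕ) (c : Sym2 V → ℕ) (u : V) (f : ℕ → V) (n : ℕ) : Prop where
  adj : ∀ i ≤ n, G.Adj u (f i)
  injOn : Set.InjOn f (Set.Iic n)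
  uncolored : c s(u, f 0) = 0
  missing : ∀ i < n, G.IsMissingColor D c (f i) (c s(u, f (i + 1)))

variable {G} {D : ℕ} {c : Sym2 V → ℕ} {u w : V} {f : ℕ → V} {m n : ℕ} {α β γ : ℕ}

lemma IsFan.mono (hf : G.IsFan D c u f n) (hm : m ≤ n) : G.IsFan D c u f m :=
  ⟨fun i hi => hf.adj i (hi.trans hm), hf.injOn.mono (Set.Iic_subset_Iic.mpr hm),
    hf.uncolored, fun i hi => hf.missing i (hi.trans_le hm)⟩

lemma IsFan.lt_card [Fintype V] (hf : G.IsFan D c u f n) : n < Fintype.card V := by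
  have := card_le_card_of_injOn f (s := range (n + 1)) (t := univ) (fun _ _ => mem_univ _)
    fun i hi j hj => hf.injOn (Nat.lt_succ_iff.mp (mem_range.mp hi))
      (Nat.lt_succ_iff.mp (mem_range.mp hj))
  rw [card_range, card_univ] at this
  omega

lemma IsFan.color_injOn (hc : G.IsPartialEdgeColoring D c) (hf : G.IsFan D c u f n)
    {i j : ℕ} (hi : i < n) (hj : j < n) (h : c s(u, f (i + 1)) = c s(u, f (j + 1))) : i = j := by
  by_contra hij
  refine hc.proper (hf.adj _ hi) (hf.adj _ hj) (fun hf' => hij ?_)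
    (Nat.one_le_iff_ne_zero.mp (hf.missing i hi).1) h
  have := hf.injOn (show i + 1 ≤ n from hi) (show j + 1 ≤ n from hj) hf'
  omega

lemma IsFan.snoc (hf : G.IsFan D c u f n) (hw : G.Adj u w) (hwf : ∀ i ≤ n, f i ≠ w)
    (hmiss : G.IsMissingColor D c (f n) (c s(u, w))) :
    G.IsFan D c u (Function.update f (n + 1) w) (n + 1) := by
  have hf_lt : ∀ i ≤ n, Function.update f (n + 1) w i = f i := fun i hi =>
    Function.update_of_ne (by omega) _ _
  refine ⟨fun i hi => ?_, fun i hi j hj h => ?_, ?_, fun i hi => ?_⟩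
  · rcases Nat.lt_or_ge n i with hni | hin
    · rwa [show i = n + 1 by omega, Function.update_self]
    · rw [hf_lt i hin]; exact hf.adj i hin
  · simp only [Set.mem_Iic] at hi hj
    rcases Nat.lt_or_ge n i with hni | hin <;> rcases Nat.lt_or_ge n j with hnj | hjn
    · omega
    · rw [show i = n + 1 by omega, Function.update_self, hf_lt j hjn] at h
      exact absurd h.symm (hwf j hjn)
    · rw [show j = n + 1 by omega, Function.update_self, hf_lt i hin] at h
      exact absurd h (hwf i hin)
    · rw [hf_lt i hin, hf_lt j hjn] at h
      exact hf.injOn hin hjn h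
  · rw [hf_lt 0 n.zero_le]; exact hf.uncolored
  · rw [hf_lt i (by omega)]
    rcases Nat.lt_or_ge i n with hin | hni
    · rw [hf_lt (i + 1) hin]; exact hf.missing i hin
    · rwa [show i = n by omega, Function.update_self]

variable [DecidableEq V]

/-- Shift the colors down the fan: `u (f i)` takes the color of `u (f (i + 1))` and `u (f n)`
takes `γ`. -/
lemma IsFan.canColorEdge_of_isMissingColor (hc : G.IsPartialEdgeColoring D c)
    (hf : G.IsFan D c u f n) (hu : G.IsMissingColor D c u γ)
    (hn : G.IsMissingColor D c (f n) γ) : G.CanColorEdge D c s(u, f 0) := by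
  induction n generalizing c γ with
  | zero => exact canColorEdge_of_isMissingColor hc hu hn
  | succ n ih =>
    have hlast := hf.adj (n + 1) le_rfl
    have hfn : ∀ i ≤ n, f i ≠ f (n + 1) := fun i hi h => by
      have := hf.injOn (show i ≤ n + 1 by omega) (show n + 1 ≤ n + 1 from le_rfl) h
      omega
    have hne : ∀ i ≤ n, s(u, f i) ≠ s(u, f (n + 1)) := fun i hi h =>
      hfn i hi (Sym2.congr_right.mp h)
    have hmiss : ∀ i ≤ n, ∀ δ, G.IsMissingColor D (Function.update c s(u, f (n + 1)) γ) (f i) δ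
        ↔ G.IsMissingColor D c (f i) δ := fun i hi _ =>
      isMissingColor_update_of_ne (hf.adj i (by omega)).ne' (hfn i hi)
    have hf' : G.IsFan D (Function.update c s(u, f (n + 1)) γ) u f n :=
      ⟨fun i hi => hf.adj i (by omega), hf.injOn.mono (Set.Iic_subset_Iic.mpr n.le_succ),
        by rw [Function.update_of_ne (hne 0 n.zero_le)]; exact hf.uncolored,
        fun i hi => by
          rw [Function.update_of_ne (hne (i + 1) hi), hmiss i hi.le]
          exact hf.missing i (by omega)⟩
    have hold := hf.missing n n.lt_succ_self
    refine (ih (hc.update hu hn) hf' (γ := c s(u, f (n + 1)))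
      (hc.isMissingColor_update hlast (Nat.one_le_iff_ne_zero.mp hold.1)
        (hu.2.2 _ hlast).symm) ((hmiss n le_rfl _).mpr hold)).mono ?_
    rw [Function.support_update_of_ne_zero _ _ (Nat.one_le_iff_ne_zero.mp hu.1)]
    exact Set.subset_insert _ _

lemma IsFan.canColorEdge_of_kempeSwap (hc : G.IsPartialEdgeColoring D c)
    (hf : G.IsFan D c u f n) (hα : G.IsMissingColor D c u α)
    (hβ : G.IsMissingColor D c (f n) β)
    (hu : ¬ (G.kempeGraph c α β).Reachable (f n) u)
    (hfβ : ∀ i < n, c s(u, f (i + 1)) = β → ¬ (G.kempeGraph c α β).Reachable (f n) (f i)) :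
    G.CanColorEdge D c s(u, f 0) := by
  have hα0 : α ≠ 0 := Nat.one_le_iff_ne_zero.mp hα.1
  have hβ0 : β ≠ 0 := Nat.one_le_iff_ne_zero.mp hβ.1
  have hcu : ∀ i ≤ n, G.kempeSwap c α β (f n) s(u, f i) = c s(u, f i) := fun i hi =>
    kempeSwap_of_not_reachable (hf.adj i hi) hu
  have hf' : G.IsFan D (G.kempeSwap c α β (f n)) u f n := by
    refine ⟨hf.adj, hf.injOn, (hcu 0 n.zero_le).trans hf.uncolored, fun i hi => ?_⟩
    rw [hcu (i + 1) hi]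
    by_cases h : c s(u, f (i + 1)) = β
    · exact (isMissingColor_kempeSwap_of_not_reachable (hfβ i hi h)).mpr (hf.missing i hi)
    · exact (isMissingColor_kempeSwap_of_ne (hα.2.2 _ (hf.adj _ hi)) h).mpr (hf.missing i hi)
  exact (hf'.canColorEdge_of_isMissingColor (hc.kempeSwap hα0 hβ0 hα.2.1 hβ.2.1)
    ((isMissingColor_kempeSwap_of_not_reachable hu).mpr hα)
    (hβ.kempeSwap (Reachable.refl _) hα.1 hα.2.1)).mono (support_kempeSwap hα0 hβ0).ge

end Fan

section Vizing

variable {G : SimpleGraph V} [Fintype V] [DecidableEq V] [DecidableRel G.Adj] {D : ℕ}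
  {c : Sym2 V → ℕ} {u : V}

theorem IsFan.canColorEdge {f : ℕ → V} {n : ℕ} (hdeg : ∀ x, G.degree x ≤ D)
    (hc : G.IsPartialEdgeColoring D c) (hf : G.IsFan D c u f n) : G.CanColorEdge D c s(u, f 0) := by
  obtain ⟨β, hβ⟩ := exists_isMissingColor (c := c) (hdeg (f n))
  by_cases hβu : G.IsMissingColor D c u β
  · exact hf.canColorEdge_of_isMissingColor hc hβu hβ
  obtain ⟨w, huw, hw⟩ : ∃ w, G.Adj u w ∧ c s(u, w) = β := by
    simpa [IsMissingColor, hβ.1, hβ.2.1] using hβu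
  by_cases hwf : ∃ j ≤ n, f j = w
  · obtain ⟨j, hjn, rfl⟩ := hwf
    obtain ⟨j, rfl⟩ : ∃ j', j = j' + 1 := Nat.exists_eq_succ_of_ne_zero fun h => by
      subst h; have := hβ.1; rw [← hw, hf.uncolored] at this; omega
    obtain ⟨α, hα⟩ := exists_isMissingColor (c := c) (hdeg u)
    have hβj : G.IsMissingColor D c (f j) β := hw ▸ hf.missing j hjn
    have hβ_only : ∀ i < n, c s(u, f (i + 1)) = β → i = j := fun i hi h =>
      hf.color_injOn hc hi hjn (h.trans hw.symm)
    by_cases hr : (G.kempeGraph c α β).Reachable (f j) u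
    · have hnu : ¬ (G.kempeGraph c α β).Reachable (f n) u := fun hnu => by
        have := hf.injOn (show j ≤ n by omega) (show n ≤ n from le_rfl)
          (hc.eq_of_reachable_kempeGraph hα hβj hβ (hf.adj j (by omega)).ne'
            (hf.adj n le_rfl).ne' hr.symm hnu.symm)
        omega
      refine hf.canColorEdge_of_kempeSwap hc hα hβ hnu fun i hi h hri => hnu ?_
      rw [hβ_only i hi h] at hri
      exact hri.trans hr
    · exact (hf.mono (by omega)).canColorEdge_of_kempeSwap hc hα hβj hr
        fun i hi h => absurd (hβ_only i (by omega) h) (by omega)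
  · push Not at hwf
    -- `hlt` makes the recursive call decrease `Fintype.card V - n`.
    have hlt := hf.lt_card
    have := IsFan.canColorEdge hdeg hc (hf.snoc huw hwf (hw ▸ hβ))
    rwa [Function.update_of_ne (by omega)] at this
termination_by Fintype.card V - n

lemma exists_isPartialEdgeColoring_subset_support (hdeg : ∀ x, G.degree x ≤ D)
    (s : Finset (Sym2 V)) (hs : ↑s ⊆ G.edgeSet) :
    ∃ c, G.IsPartialEdgeColoring D c ∧ ↑s ⊆ Function.support c := by
  induction s using Finset.induction_on with
  | empty => exact ⟨0, ⟨fun _ _ _ => Nat.zero_le _, fun _ _ _ _ _ _ h => absurd rfl h⟩, by simp⟩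
  | insert e s _ ih =>
    rw [coe_insert, Set.insert_subset_iff] at hs
    rw [coe_insert]
    obtain ⟨c, hc, hsc⟩ := ih hs.2
    induction e using Sym2.ind with
    | h u v =>
    by_cases h0 : c s(u, v) = 0
    · have hf : G.IsFan D c u (fun _ => v) 0 :=
        ⟨fun _ _ => hs.1, fun i hi j hj _ => (Nat.le_zero.mp hi).trans (Nat.le_zero.mp hj).symm, h0,
          nofun⟩
      obtain ⟨c', hc', hsub⟩ := hf.canColorEdge hdeg hc
      exact ⟨c', hc', (Set.insert_subset_insert hsc).trans hsub⟩
    · exact ⟨c, hc, Set.insert_subset h0 hsc⟩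

/-- Vizing's theorem. -/
theorem exists_isProperEdgeColoring_of_degree_le (hdeg : ∀ x, G.degree x ≤ D) :
    ∃ c, IsProperEdgeColoring G c ∧ ∀ e ∈ G.edgeSet, c e ∈ Icc 1 (D + 1) := by
  obtain ⟨c, hc, hsupp⟩ := exists_isPartialEdgeColoring_subset_support hdeg G.edgeFinset
    (by rw [coe_edgeFinset])
  rw [coe_edgeFinset] at hsupp
  refine ⟨c, ?_, fun e he => ?_⟩
  · rintro _ he₁ _ he₂ hne ⟨x, hx₁, hx₂⟩
    obtain ⟨a, rfl⟩ := Sym2.mem_iff_exists.mp hx₁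
    obtain ⟨b, rfl⟩ := Sym2.mem_iff_exists.mp hx₂
    exact hc.proper he₁ he₂ (fun h => hne (h ▸ rfl)) (hsupp he₁)
  · induction e using Sym2.ind with
    | h x y => exact mem_Icc.mpr ⟨Nat.one_le_iff_ne_zero.mpr (hsupp he), hc.le_succ he⟩

end Vizing

end SimpleGraph

lemma isIntervalColoring_of_two_colors {H : SimpleGraph V} {c : Sym2 V → ℕ}
    (hc : IsProperEdgeColoring H c) (h : ∀ e ∈ H.edgeSet, c e ∈ Icc 1 2) :
    IsIntervalColoring H c := by
  refine ⟨hc, fun e he => (mem_Icc.mp (h e he)).1, ?_⟩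
  rintro v _ ⟨e, he, hve, rfl⟩ _ ⟨e', he', hve', rfl⟩ k hek hke'
  have := mem_Icc.mp (h e he)
  have := mem_Icc.mp (h e' he')
  obtain rfl | rfl : k = c e ∨ k = c e' := by omega
  exacts [⟨e, he, hve, rfl⟩, ⟨e', he', hve', rfl⟩]

lemma intervalDecomposition_of_isProperEdgeColoring {G : SimpleGraph V} {c : Sym2 V → ℕ}
    {k : ℕ} (hc : IsProperEdgeColoring G c) (hrange : ∀ e ∈ G.edgeSet, c e ∈ Icc 1 (2 * k)) :
    IntervalDecomposition G k := by
  let H : Fin k → SimpleGraph V := fun i => G.deleteEdges {e | (c e - 1) / 2 ≠ i}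
  have hH : ∀ i e, e ∈ (H i).edgeSet ↔ e ∈ G.edgeSet ∧ (c e - 1) / 2 = i := fun i e => by
    simp [H, edgeSet_deleteEdges]
  refine ⟨H, fun i => G.deleteEdges_le _, fun i => ⟨fun e => c e - 2 * i, ?_⟩, fun e he => ?_⟩
  · refine isIntervalColoring_of_two_colors ?_ fun e he => ?_
    · rintro e₁ he₁ e₂ he₂ hne hshare
      rw [hH] at he₁ he₂
      have := hc e₁ he₁.1 e₂ he₂.1 hne hshare
      change c e₁ - 2 * i ≠ c e₂ - 2 * i
      omega
    · rw [hH] at he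
      have := mem_Icc.mp (hrange e he.1)
      exact mem_Icc.mpr (by omega)
  · have := mem_Icc.mp (hrange e he)
    refine ⟨⟨(c e - 1) / 2, by omega⟩, (hH _ e).mpr ⟨he, rfl⟩, fun i hi => Fin.ext ?_⟩
    exact ((hH i e).mp hi).2.symm

theorem intervalThickness_le_of_maxDegree_general [Fintype V]
    (G : SimpleGraph V) [DecidableRel G.Adj] :
    intervalThickness G ≤ 2 * ((3 * G.maxDegree + 9) / 10) := by
  classical
  obtain ⟨c, hc, hrange⟩ := G.exists_isProperEdgeColoring_of_degree_le G.degree_le_maxDegree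
  refine Nat.sInf_le (intervalDecomposition_of_isProperEdgeColoring hc fun e he => ?_)
  have hΔ : 0 < G.maxDegree := by
    induction e using Sym2.ind with
    | h x y =>
      exact ((G.degree_pos_iff_exists_adj x).mpr ⟨y, he⟩).trans_le (G.degree_le_maxDegree x)
  have := mem_Icc.mp (hrange e he)
  exact mem_Icc.mpr ⟨this.1, by omega⟩

theorem intervalThickness_le_of_maxDegree [Fintype V] [DecidableEq V]
    (G : SimpleGraph V) [DecidableRel G.Adj] :
    intervalThickness G ≤ 2 * ((3 * G.maxDegree + 9) / 10) :=
  intervalThickness_le_of_maxDegree_general G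
end

section
/- Every Eulerian bipartite graph G satisfies θ_int(G) ≤ ⌈Δ(G)/4⌉. -/
open SimpleGraph

variable {V : Type*}

/-!
Orient `G` so that every vertex has in- and out-degree `deg v / 2` (Hall's theorem on edges
versus "half-degree slots" at the vertices). Padding the diagonal, the adjacency matrix of this
orientation becomes a nonnegative integer matrix with all line sums `K = ⌈Δ/2⌉`, hence a sum of
`K` permutation matrices. Each permutation `π j` traces directed cycles of `G`; colouring the arc
`x → π j x` with `2j + 1` or `2j + 2` according to the side of `x` in the bipartition gives every
vertex moved by `π j` exactly the colours `2j + 1, 2j + 2`. Grouping the classes in pairs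
`{2i, 2i + 1}` therefore yields `⌈K/2⌉ = ⌈Δ/4⌉` interval-coloured subgraphs.
-/

open Finset

theorem exists_card_fiber_le_of_hall {ι β : Type*} [Fintype ι] [Fintype β] [DecidableEq β]
    (r : ι → β → Prop) [DecidableRel r] (c : β → ℕ)
    (hall : ∀ A : Finset ι, #A ≤ ∑ b with ∃ i ∈ A, r i b, c b) :
    ∃ g : ι → β, (∀ i, r i (g i)) ∧ ∀ b, #{i | g i = b} ≤ c b := by
  obtain ⟨f, hf_inj, hf⟩ := (Fintype.all_card_le_filter_rel_iff_exists_injective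
    (fun i (s : Σ b, Fin (c b)) => r i s.1)).1 fun A => by
      have hslots : ({s | ∃ i ∈ A, r i s.1} : Finset (Σ b, Fin (c b))) =
          ({b | ∃ i ∈ A, r i b} : Finset β).sigma fun _ => univ := by
        ext; simp
      simpa [hslots, card_sigma] using hall A
  refine ⟨fun i => (f i).1, hf, fun b => ?_⟩
  calc #{i | (f i).1 = b} ≤ #(({b} : Finset β).sigma fun _ => univ) :=
        card_le_card_of_injOn f (fun i hi => by simpa using hi) hf_inj.injOn
    _ = c b := by simp

theorem exists_perm_forall_ne_zero [Fintype V] {K : ℕ} (hK : 0 < K) (m : V → V → ℕ)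
    (hrow : ∀ x, ∑ y, m x y = K) (hcol : ∀ y, ∑ x, m x y ≤ K) :
    ∃ σ : Equiv.Perm V, ∀ x, m x (σ x) ≠ 0 := by
  obtain ⟨f, hf_inj, hf⟩ := (Fintype.all_card_le_filter_rel_iff_exists_injective
    fun x y => m x y ≠ 0).1 fun A => by
      set N : Finset V := {y | ∃ x ∈ A, m x y ≠ 0}
      have hsupp : ∀ x ∈ A, ∑ y ∈ N, m x y = ∑ y, m x y := fun x hx =>
        sum_subset (subset_univ N) fun y _ hy => by
          by_contra h
          exact hy (mem_filter.2 ⟨mem_univ y, x, hx, h⟩)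
      refine Nat.le_of_mul_le_mul_left ?_ hK
      calc K * #A = ∑ x ∈ A, ∑ y ∈ N, m x y := by
            rw [sum_congr rfl hsupp]; simp [hrow, mul_comm]
        _ = ∑ y ∈ N, ∑ x ∈ A, m x y := sum_comm
        _ ≤ ∑ y ∈ N, ∑ x, m x y :=
            sum_le_sum fun y _ => sum_le_sum_of_subset (subset_univ A)
        _ ≤ ∑ y ∈ N, K := sum_le_sum fun y _ => hcol y
        _ = K * #N := by simp [mul_comm]
  exact ⟨Equiv.ofBijective f (Finite.injective_iff_bijective.1 hf_inj), hf⟩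

theorem exists_perms_card_eq_of_sum_eq [Fintype V] [DecidableEq V] (K : ℕ) (m : V → V → ℕ)
    (hrow : ∀ x, ∑ y, m x y = K) (hcol : ∀ y, ∑ x, m x y = K) :
    ∃ π : Fin K → Equiv.Perm V, ∀ x y, m x y = #{j | π j x = y} := by
  induction K generalizing m with
  | zero =>
    exact ⟨Fin.elim0, fun x y => by simpa using (sum_eq_zero_iff.1 (hrow x)) y (mem_univ y)⟩
  | succ K ih =>
    obtain ⟨σ, hσ⟩ := exists_perm_forall_ne_zero K.succ_pos m hrow fun y => (hcol y).le
    have hsplit (x y : V) :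
        m x y = (m x y - if σ x = y then 1 else 0) + if σ x = y then 1 else 0 := by
      split_ifs with h
      · have := hσ x; rw [h] at this; omega
      · rfl
    obtain ⟨π, hπ⟩ := ih (fun x y => m x y - if σ x = y then 1 else 0)
      (fun x => by
        have := hrow x
        rw [sum_congr rfl fun y _ => hsplit x y, sum_add_distrib] at this
        simpa using this)
      (fun y => by
        have := hcol y
        rw [sum_congr rfl fun x _ => hsplit x y, sum_add_distrib] at this
        simpa [← Equiv.eq_symm_apply] using this)
    refine ⟨Fin.cons σ π, fun x y => ?_⟩
    rw [hsplit x y, hπ x y, Fin.card_filter_univ_succ]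
    simp only [Fin.cons_zero, Fin.cons_succ]
    split_ifs <;> rfl

theorem sum_card_out_eq_sum_card_in [Fintype V] (D : V → V → Prop) [DecidableRel D] :
    ∑ v, #{w | D v w} = ∑ v, #{w | D w v} := by
  simp only [card_filter]
  exact sum_comm

structure SimpleGraph.IsOrientation (G : SimpleGraph V) (D : V → V → Prop) : Prop where
  adj_iff : ∀ x y, G.Adj x y ↔ D x y ∨ D y x
  asymm : ∀ x y, D x y → ¬ D y x

section Orientation

variable [Fintype V] [DecidableEq V] {G : SimpleGraph V} [DecidableRel G.Adj]

namespace SimpleGraph.IsOrientation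

variable {D : V → V → Prop} [DecidableRel D]

theorem card_out_add_card_in (hD : G.IsOrientation D) (v : V) :
    #{w | D v w} + #{w | D w v} = G.degree v := by
  rw [← card_union_of_disjoint (disjoint_filter.2 fun w _ h => hD.asymm v w h), ← filter_or,
    ← card_neighborFinset_eq_degree, neighborFinset_eq_filter]
  simp only [hD.adj_iff]

theorem card_out_and_card_in_eq_half_degree (hD : G.IsOrientation D)
    (heul : ∀ v, Even (G.degree v)) (hle : ∀ v, #{w | D v w} ≤ G.degree v / 2) (v : V) :
    #{w | D v w} = G.degree v / 2 ∧ #{w | D w v} = G.degree v / 2 := by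
  have hsum : ∑ v, #{w | D v w} = ∑ v, G.degree v / 2 := by
    have h1 : ∑ v, #{w | D v w} + ∑ v, #{w | D w v} = ∑ v, G.degree v := by
      rw [← sum_add_distrib]; exact sum_congr rfl fun v _ => hD.card_out_add_card_in v
    have h2 : ∑ v, G.degree v = 2 * ∑ v, G.degree v / 2 := by
      rw [mul_sum]
      exact sum_congr rfl fun v _ => (Nat.two_mul_div_two_of_even (heul v)).symm
    have h3 := sum_card_out_eq_sum_card_in D
    omega
  have hout := (sum_eq_sum_iff_of_le fun v _ => hle v).1 hsum v (mem_univ v)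
  have := hD.card_out_add_card_in v
  have := Nat.two_mul_div_two_of_even (heul v)
  omega

end SimpleGraph.IsOrientation

theorem SimpleGraph.card_le_sum_half_degree (heul : ∀ v, Even (G.degree v))
    (A : Finset G.edgeSet) : #A ≤ ∑ v with ∃ e ∈ A, v ∈ (e : Sym2 V), G.degree v / 2 := by
  set W : Finset V := {v | ∃ e ∈ A, v ∈ (e : Sym2 V)}
  let r (e : G.edgeSet) (v : V) : Prop := v ∈ (e : Sym2 V)
  have hends : ∀ e ∈ A, #(W.bipartiteAbove r e) = 2 := by
    intro e he
    have : W.bipartiteAbove r e = (e : Sym2 V).toFinset := by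
      ext v
      simp only [r, bipartiteAbove, mem_filter, Sym2.mem_toFinset, and_iff_right_iff_imp]
      exact fun hv => mem_filter.2 ⟨mem_univ v, e, he, hv⟩
    rw [this, Sym2.card_toFinset_of_not_isDiag _ (G.not_isDiag_of_mem_edgeSet e.2)]
  have hdeg : ∀ v ∈ W, #(A.bipartiteBelow r v) ≤ G.degree v := by
    intro v _
    rw [← G.card_incidenceFinset_eq_degree v]
    refine card_le_card_of_injOn Subtype.val (fun e he => ?_) Subtype.val_injective.injOn
    simp only [r, bipartiteBelow, coe_filter] at he
    simpa [G.incidenceFinset_eq_filter] using he.2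
  have hdouble := sum_card_bipartiteAbove_eq_sum_card_bipartiteBelow r (s := A) (t := W)
  rw [sum_congr rfl hends, sum_const, smul_eq_mul] at hdouble
  have heven : ∑ v ∈ W, G.degree v = 2 * ∑ v ∈ W, G.degree v / 2 := by
    rw [mul_sum]
    exact sum_congr rfl fun v _ => (Nat.two_mul_div_two_of_even (heul v)).symm
  have := sum_le_sum hdeg
  omega

open Classical in
theorem SimpleGraph.exists_isOrientation_card_out_le {tail : G.edgeSet → V}
    (htail : ∀ e : G.edgeSet, tail e ∈ (e : Sym2 V)) :
    ∃ D, G.IsOrientation D ∧ ∀ v, #{w | D v w} ≤ #{e | tail e = v} := by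
  let head (e : G.edgeSet) : V := Sym2.Mem.other (htail e)
  have hspec (e : G.edgeSet) : s(tail e, head e) = e := Sym2.other_spec (htail e)
  have hne (e : G.edgeSet) : head e ≠ tail e :=
    Sym2.other_ne (G.not_isDiag_of_mem_edgeSet e.2) (htail e)
  refine ⟨fun x y => ∃ e, tail e = x ∧ head e = y, ⟨fun x y => ⟨fun h => ?_, ?_⟩, ?_⟩,
    fun v => ?_⟩
  · let e : G.edgeSet := ⟨s(x, y), h⟩
    rcases Sym2.mem_iff.1 (htail e) with hx | hy
    · have h' := hspec e
      rw [hx] at h'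
      exact Or.inl ⟨e, hx, Sym2.congr_right.1 h'⟩
    · have h' := hspec e
      rw [hy] at h'
      exact Or.inr ⟨e, hy, Sym2.congr_right.1 (h'.trans (Sym2.eq_swap (a := x) (b := y)))⟩
  · rintro (⟨e, rfl, rfl⟩ | ⟨e, rfl, rfl⟩)
    · exact G.mem_edgeSet.1 ((hspec e).symm ▸ e.2)
    · exact (G.mem_edgeSet.1 ((hspec e).symm ▸ e.2)).symm
  · rintro x y ⟨e₁, rfl, rfl⟩ ⟨e₂, h₂, h₂'⟩
    have : e₁ = e₂ :=
      Subtype.ext (by rw [← hspec, ← hspec e₂, ← h₂, ← h₂', Sym2.eq_swap])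
    subst this
    exact hne e₁ h₂.symm
  · refine card_le_card_of_surjOn head fun w hw => ?_
    obtain ⟨e, he, rfl⟩ : ∃ e, tail e = v ∧ head e = w := by simpa using hw
    exact ⟨e, by simpa using he, rfl⟩

open Classical in
theorem SimpleGraph.exists_isOrientation_card_eq_half_degree (heul : ∀ v, Even (G.degree v)) :
    ∃ D, G.IsOrientation D ∧
      ∀ v, #{w | D v w} = G.degree v / 2 ∧ #{w | D w v} = G.degree v / 2 := by
  obtain ⟨tail, htail, hcap⟩ := exists_card_fiber_le_of_hall
    (fun (e : G.edgeSet) v => v ∈ (e : Sym2 V)) (fun v => G.degree v / 2)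
    (G.card_le_sum_half_degree heul)
  obtain ⟨D, hD, hout⟩ := exists_isOrientation_card_out_le htail
  exact ⟨D, hD, hD.card_out_and_card_in_eq_half_degree heul fun v => (hout v).trans (hcap v)⟩

end Orientation

/-- `G` split into `K` subgraphs of maximum degree 2, the `j`-th one traversed by the cycles of
`π j`. -/
structure SimpleGraph.IsPermDecomposition (G : SimpleGraph V) {K : ℕ}
    (π : Fin K → Equiv.Perm V) : Prop where
  adj_apply : ∀ j x, π j x ≠ x → G.Adj x (π j x)
  existsUnique_arc : ∀ e ∈ G.edgeSet, ∃! a : Fin K × V, s(a.2, π a.1 a.2) = e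

section PermDecomposition

variable [DecidableEq V] {G : SimpleGraph V}

theorem SimpleGraph.IsOrientation.isPermDecomposition {D : V → V → Prop} [DecidableRel D]
    {K : ℕ} {π : Fin K → Equiv.Perm V} (hD : G.IsOrientation D)
    (hcard : ∀ x y, x ≠ y → #{j | π j x = y} = if D x y then 1 else 0) :
    G.IsPermDecomposition π := by
  have hcount {x y : V} (hxy : x ≠ y) : (∃ j, π j x = y) ↔ D x y := by
    have hpos : (∃ j, π j x = y) ↔ 0 < #{j | π j x = y} := by
      simp [card_pos, filter_nonempty_iff]
    rw [hpos, hcard x y hxy]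
    split_ifs <;> simp [*]
  have harc {x y : V} (h : D x y) : ∃! a : Fin K × V, s(a.2, π a.1 a.2) = s(x, y) := by
    have hxy : x ≠ y := ((hD.adj_iff x y).2 (Or.inl h)).ne
    obtain ⟨j, hj⟩ := card_eq_one.1 ((hcard x y hxy).trans (if_pos h))
    have hmem (j' : Fin K) : π j' x = y ↔ j' = j := by
      simpa using congrArg (j' ∈ ·) hj
    refine ⟨(j, x), by simp [(hmem j).2 rfl], ?_⟩
    rintro ⟨j', z⟩ hz
    rcases Sym2.eq_iff.1 hz with ⟨rfl, h'⟩ | ⟨rfl, h'⟩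
    · exact Prod.ext ((hmem j').1 h') rfl
    · exact absurd ((hcount hxy.symm).1 ⟨j', h'⟩) (hD.asymm x z h)
  refine ⟨fun j x hx => (hD.adj_iff x _).2 (Or.inl ((hcount hx.symm).1 ⟨j, rfl⟩)),
    fun e he => ?_⟩
  induction e using Sym2.ind with
  | _ x y =>
    rcases (hD.adj_iff x y).1 he with h | h
    · exact harc h
    · rw [Sym2.eq_swap]
      exact harc h

theorem SimpleGraph.exists_isPermDecomposition [Fintype V] [DecidableRel G.Adj]
    (heul : ∀ v, Even (G.degree v)) {K : ℕ} (hK : ∀ v, G.degree v ≤ 2 * K) :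
    ∃ π : Fin K → Equiv.Perm V, G.IsPermDecomposition π := by
  classical
  obtain ⟨D, hD, hdeg⟩ := exists_isOrientation_card_eq_half_degree heul
  let m (x y : V) : ℕ := (if D x y then 1 else 0) + if x = y then K - G.degree x / 2 else 0
  have hrow (x : V) : ∑ y, m x y = K := by
    have := (hdeg x).1
    have := hK x
    simp only [m, sum_add_distrib, sum_boole, Nat.cast_id, sum_ite_eq, mem_univ, if_true]
    omega
  have hcol (y : V) : ∑ x, m x y = K := by
    have := (hdeg y).2
    have := hK y
    simp only [m, sum_add_distrib, sum_boole, Nat.cast_id, sum_ite_eq', mem_univ, if_true]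
    omega
  obtain ⟨π, hπ⟩ := exists_perms_card_eq_of_sum_eq K m hrow hcol
  exact ⟨π, hD.isPermDecomposition fun x y hxy => by simp [← hπ, m, hxy]⟩

end PermDecomposition

section Coloring

variable {K : ℕ}

open Classical in
noncomputable def arcColoring (π : Fin K → Equiv.Perm V) (side : V → Fin 2) (e : Sym2 V) :
    ℕ :=
  if h : ∃ a : Fin K × V, s(a.2, π a.1 a.2) = e then 2 * h.choose.1 + side h.choose.2 + 1
  else 0

def permPairGraph (π : Fin K → Equiv.Perm V) (i : ℕ) : SimpleGraph V :=
  SimpleGraph.fromRel fun x y => ∃ j : Fin K, (j : ℕ) / 2 = i ∧ π j x = y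

theorem permPairGraph_adj_apply {π : Fin K → Equiv.Perm V} {j : Fin K} {x : V}
    (hx : π j x ≠ x) :
    (permPairGraph π (j / 2)).Adj x (π j x) :=
  (fromRel_adj _ _ _).2 ⟨hx.symm, Or.inl ⟨j, rfl, rfl⟩⟩

theorem SimpleGraph.Coloring.val_add_val_eq_one {G : SimpleGraph V} (C : G.Coloring (Fin 2))
    {x y : V} (h : G.Adj x y) : (C x : ℕ) + C y = 1 := by
  have := Fin.val_ne_of_ne (C.valid h)
  omega

namespace SimpleGraph.IsPermDecomposition
variable {G : SimpleGraph V} {π : Fin K → Equiv.Perm V} (hπ : G.IsPermDecomposition π)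
  (C : G.Coloring (Fin 2))
include hπ

theorem arcColoring_apply (side : V → Fin 2) {j : Fin K} {x : V} (hx : π j x ≠ x) :
    arcColoring π side s(x, π j x) = 2 * j + side x + 1 := by
  have hex : ∃ a : Fin K × V, s(a.2, π a.1 a.2) = s(x, π j x) := ⟨(j, x), rfl⟩
  have huniq := (hπ.existsUnique_arc _ (hπ.adj_apply j x hx)).unique hex.choose_spec
    (y₂ := (j, x)) rfl
  rw [arcColoring, dif_pos hex, huniq]

theorem exists_of_mem_edgeSet_permPairGraph {i : ℕ} {e : Sym2 V} {v : V}
    (he : e ∈ (permPairGraph π i).edgeSet) (hv : v ∈ e) :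
    ∃ j : Fin K, (j : ℕ) / 2 = i ∧ π j v ≠ v ∧
      (e = s(v, π j v) ∧ arcColoring π C e = 2 * j + C v + 1 ∨
        e = s((π j).symm v, v) ∧ arcColoring π C e = 2 * j + 2 - C v) := by
  obtain ⟨w, rfl⟩ := Sym2.mem_iff_exists.1 hv
  obtain ⟨hvw, ⟨j, hj, rfl⟩ | ⟨j, hj, hwv⟩⟩ :=
    (fromRel_adj _ v w).1 ((mem_edgeSet _).1 he)
  · exact ⟨j, hj, hvw.symm, Or.inl ⟨rfl, hπ.arcColoring_apply C hvw.symm⟩⟩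
  · have hw : π j w ≠ w := hwv ▸ hvw
    refine ⟨j, hj, fun h => hvw (π j |>.injective (h.trans hwv.symm)), Or.inr ⟨?_, ?_⟩⟩
    · rw [← hwv, Equiv.symm_apply_apply, Sym2.eq_swap]
    · have hsum := C.val_add_val_eq_one (hπ.adj_apply j w hw)
      have hcol := hπ.arcColoring_apply C hw
      rw [hwv] at hsum hcol
      rw [Sym2.eq_swap, hcol]
      omega

theorem colorsAt_permPairGraph (i : ℕ) (v : V) :
    colorsAt (permPairGraph π i) (arcColoring π C) v =
      {k | ∃ j : Fin K, (j : ℕ) / 2 = i ∧ π j v ≠ v ∧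
        (k = 2 * (j : ℕ) + 1 ∨ k = 2 * (j : ℕ) + 2)} := by
  have hCv := (C v).isLt
  ext k
  constructor
  · rintro ⟨e, he, hv, rfl⟩
    obtain ⟨j, hj, hjv, ⟨-, hc⟩ | ⟨-, hc⟩⟩ :=
      hπ.exists_of_mem_edgeSet_permPairGraph C he hv <;>
      exact ⟨j, hj, hjv, by omega⟩
  · rintro ⟨j, hj, hjv, hk⟩
    obtain ⟨u, hu⟩ : ∃ u, π j u = v := (π j).surjective v
    have huv : u ≠ v := fun h => hjv (h ▸ hu)
    have hju : π j u ≠ u := by rw [hu]; exact huv.symm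
    subst hj
    have hout := permPairGraph_adj_apply hjv
    have hin := permPairGraph_adj_apply hju
    have hcin := hπ.arcColoring_apply C hju
    have hsum := C.val_add_val_eq_one (hπ.adj_apply j u hju)
    rw [hu] at hin hcin hsum
    by_cases hside : k = 2 * j + C v + 1
    · exact ⟨_, hout, Sym2.mem_mk_left _ _, (hπ.arcColoring_apply C hjv).trans hside.symm⟩
    · exact ⟨_, hin, Sym2.mem_mk_right _ _, by omega⟩

theorem isIntervalColoring_permPairGraph (i : ℕ) :
    IsIntervalColoring (permPairGraph π i) (arcColoring π C) := by
  refine ⟨?_, ?_, ?_⟩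
  · rintro e₁ he₁ e₂ he₂ hne ⟨v, hv₁, hv₂⟩ hc
    have hCv := (C v).isLt
    obtain ⟨j₁, -, -, ⟨rfl, hc₁⟩ | ⟨rfl, hc₁⟩⟩ :=
      hπ.exists_of_mem_edgeSet_permPairGraph C he₁ hv₁ <;>
    obtain ⟨j₂, -, -, ⟨rfl, hc₂⟩ | ⟨rfl, hc₂⟩⟩ :=
      hπ.exists_of_mem_edgeSet_permPairGraph C he₂ hv₂ <;>
    first
    | omega
    | exact hne (by rw [Fin.ext (show (j₁ : ℕ) = j₂ by omega)])
  · intro e he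
    induction e using Sym2.ind with
    | _ x y =>
      have hx : arcColoring π C s(x, y) ∈ colorsAt (permPairGraph π i) (arcColoring π C) x :=
        ⟨_, he, Sym2.mem_mk_left x y, rfl⟩
      rw [hπ.colorsAt_permPairGraph C] at hx
      obtain ⟨j, -, -, hk⟩ := hx
      omega
  · intro v a ha b hb k hak hkb
    rw [hπ.colorsAt_permPairGraph C] at ha hb ⊢
    obtain ⟨j₁, hj₁, hv₁, ha⟩ := ha
    obtain ⟨j₂, hj₂, hv₂, hb⟩ := hb
    by_cases hk : k ≤ 2 * j₁ + 2
    · exact ⟨j₁, hj₁, hv₁, by omega⟩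
    · exact ⟨j₂, hj₂, hv₂, by omega⟩

theorem intervalDecomposition (hbip : G.Colorable 2) :
    IntervalDecomposition G ((K + 1) / 2) := by
  obtain ⟨C⟩ := hbip
  refine ⟨fun i => permPairGraph π i, fun i x y hxy => ?_,
    fun i => ⟨_, hπ.isIntervalColoring_permPairGraph C i⟩, fun e he => ?_⟩
  · obtain ⟨-, ⟨j, -, rfl⟩ | ⟨j, -, rfl⟩⟩ := (fromRel_adj _ _ _).1 hxy
    · exact hπ.adj_apply j x (Ne.symm hxy.1)
    · exact (hπ.adj_apply j y hxy.1).symm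
  obtain ⟨⟨j, x⟩, hjx, huniq⟩ := hπ.existsUnique_arc e he
  dsimp only at hjx huniq
  subst hjx
  have hx : π j x ≠ x := (G.ne_of_adj he).symm
  refine ⟨⟨j / 2, by omega⟩, ?_, fun i hi => ?_⟩
  · exact permPairGraph_adj_apply hx
  obtain ⟨j', hj', -, hcase⟩ :=
    hπ.exists_of_mem_edgeSet_permPairGraph C hi (Sym2.mem_mk_left x (π j x))
  obtain ⟨z, hz⟩ : ∃ z, s(z, π j' z) = s(x, π j x) := by
    rcases hcase with ⟨he', -⟩ | ⟨he', -⟩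
    · exact ⟨x, he'.symm⟩
    · exact ⟨(π j').symm x, by rw [Equiv.apply_symm_apply, he']⟩
  have hj : j' = j := congrArg Prod.fst (huniq (j', z) hz)
  exact Fin.ext (by rw [← hj', hj])

end SimpleGraph.IsPermDecomposition

end Coloring

theorem eulerian_bipartite_intervalThickness [Fintype V] [DecidableEq V]
    (G : SimpleGraph V) [DecidableRel G.Adj]
    (hbip : G.Colorable 2) (heul : ∀ v, Even (G.degree v)) :
    intervalThickness G ≤ (G.maxDegree + 3) / 4 := by
  obtain ⟨π, hπ⟩ := G.exists_isPermDecomposition heul (K := (G.maxDegree + 1) / 2) fun v => by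
    have := G.degree_le_maxDegree v
    omega
  have hK : ((G.maxDegree + 1) / 2 + 1) / 2 = (G.maxDegree + 3) / 4 := by omega
  exact hK ▸ Nat.sInf_le (hπ.intervalDecomposition hbip)
end

section
/- If G is a bipartite graph with parts X and Y, then θ_int(G) ≤ min{Δ(X), Δ(Y)}, where Δ(X) and Δ(Y) denote the maximum degrees among vertices of X and of Y respectively. -/
open SimpleGraph

variable {V : Type*}

/-!
Let `Δ` be the maximum degree on the side `X`. Every `x ∈ X` numbers its neighbours
`0, …, deg x - 1 < Δ` and puts the edge `xy` into layer `i` when `y` got number `i`. Inside a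
layer every vertex of `X` has degree at most one, so the layer is a disjoint union of stars
centred in `Y`; a star is interval colourable by numbering its edges `1, …, d`. By symmetry the
same works for `Y`.
-/

open Set

theorem Set.Finite.exists_bijOn_Iio_ncard {α : Type*} {s : Set α} (hs : s.Finite) :
    ∃ f : α → ℕ, BijOn f s (Iio s.ncard) :=
  hs.exists_bijOn_of_encard_eq <| by
    rw [← hs.cast_ncard_eq, ← (finite_Iio s.ncard).cast_ncard_eq, ncard_Iio_nat]

theorem SimpleGraph.ncard_neighborSet_eq_degree (G : SimpleGraph V) (v : V)
    [Fintype (G.neighborSet v)] : (G.neighborSet v).ncard = G.degree v := by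
  rw [ncard_eq_toFinset_card', ← neighborFinset_def, card_neighborFinset_eq_degree]

section IntervalColoring

variable {G : SimpleGraph V} {c : Sym2 V → ℕ}

theorem colorsAt_eq_image_s13 (v : V) :
    colorsAt G c v = (fun u => c s(v, u)) '' G.neighborSet v := by
  ext n
  constructor
  · rintro ⟨e, he, hv, rfl⟩
    obtain ⟨u, rfl⟩ := Sym2.mem_iff_exists.mp hv
    exact ⟨u, he, rfl⟩
  · rintro ⟨u, hu, rfl⟩
    exact ⟨s(v, u), hu, Sym2.mem_mk_left v u, rfl⟩

theorem isProperEdgeColoring_of_injOn (h : ∀ v, InjOn (fun u => c s(v, u)) (G.neighborSet v)) :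
    IsProperEdgeColoring G c := by
  rintro e₁ he₁ e₂ he₂ hne ⟨v, hv₁, hv₂⟩ heq
  obtain ⟨u₁, rfl⟩ := Sym2.mem_iff_exists.mp hv₁
  obtain ⟨u₂, rfl⟩ := Sym2.mem_iff_exists.mp hv₂
  exact hne (congrArg _ (h v he₁ he₂ heq))

theorem isIntervalColoring_of_injOn_of_ordConnected
    (hinj : ∀ v, InjOn (fun u => c s(v, u)) (G.neighborSet v))
    (hpos : ∀ e ∈ G.edgeSet, 1 ≤ c e)
    (hint : ∀ v, ((fun u => c s(v, u)) '' G.neighborSet v).OrdConnected) :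
    IsIntervalColoring G c := by
  refine ⟨isProperEdgeColoring_of_injOn hinj, hpos, fun v a ha b hb k hak hkb => ?_⟩
  rw [colorsAt_eq_image_s13] at ha hb ⊢
  exact (hint v).out ha hb ⟨hak, hkb⟩

end IntervalColoring

theorem intervalColorable_of_forall_adj_subsingleton {H : SimpleGraph V}
    (hfin : ∀ v, (H.neighborSet v).Finite)
    (hstar : ∀ u v, H.Adj u v →
      (H.neighborSet u).Subsingleton ∨ (H.neighborSet v).Subsingleton) :
    IntervalColorable H := by
  choose num hnum using fun v => (hfin v).exists_bijOn_Iio_ncard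
  have leaf : ∀ u v, H.Adj u v → (H.neighborSet u).Subsingleton → num u v = 0 := by
    intro u v huv hu
    have := (hnum u).mapsTo huv
    rwa [hu.eq_singleton_of_mem huv, ncard_singleton, mem_Iio, Nat.lt_one_iff] at this
  -- A leaf numbers its only neighbour `0`, so `c s(v, u) = num v u + 1` around a centre `v`.
  let c : Sym2 V → ℕ :=
    Sym2.lift ⟨fun u v => num u v + num v u + 1, fun u v => by dsimp only; omega⟩
  have centre : ∀ v, ¬ (H.neighborSet v).Subsingleton →
      EqOn (fun u => c s(v, u)) (fun u => num v u + 1) (H.neighborSet v) := by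
    intro v hv u hu
    have hu' : (H.neighborSet u).Subsingleton := (hstar v u hu).resolve_left hv
    simp [c, leaf u v hu.symm hu']
  refine ⟨c, isIntervalColoring_of_injOn_of_ordConnected (fun v => ?_) ?_ (fun v => ?_)⟩
  · by_cases hv : (H.neighborSet v).Subsingleton
    · exact hv.injOn _
    · exact ((add_left_injective 1).comp_injOn (hnum v).injOn).congr (centre v hv).symm
  · rintro ⟨u, v⟩ -
    exact Nat.le_add_left 1 _
  · by_cases hv : (H.neighborSet v).Subsingleton
    · refine ⟨fun a ha b hb k hk => ?_⟩
      rw [(hv.image _) ha hb, Icc_self, mem_singleton_iff] at hk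
      rwa [hk]
    · rw [(centre v hv).image_eq, ← image_image (· + 1), (hnum v).image_eq, ← Ico_bot,
        image_add_const_Ico]
      exact ordConnected_Ico

namespace SimpleGraph

def filterFromSide (G : SimpleGraph V) (s : Set V) (r : V → V → Prop) : SimpleGraph V :=
  G ⊓ fromRel fun u v => u ∈ s ∧ r u v

variable {G : SimpleGraph V} {s t : Set V}

theorem IsBipartiteWith.filterFromSide_adj_iff (h : G.IsBipartiteWith s t)
    {r : V → V → Prop} {u w : V} (hu : u ∈ s) :
    (G.filterFromSide s r).Adj u w ↔ G.Adj u w ∧ r u w := by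
  refine ⟨fun huw => ⟨huw.1, ?_⟩, fun ⟨huw, hr⟩ => ⟨huw, huw.ne, .inl ⟨hu, hr⟩⟩⟩
  have hw : w ∉ s := disjoint_right.mp h.disjoint (h.mem_of_mem_adj hu huw.1)
  exact (huw.2.2.resolve_right fun hw' => hw hw'.1).2

theorem IsBipartiteWith.intervalDecomposition [G.LocallyFinite] (h : G.IsBipartiteWith s t)
    {D : ℕ} (hD : ∀ v ∈ s, G.degree v ≤ D) : IntervalDecomposition G D := by
  choose num hnum using fun v => (G.neighborSet v).toFinite.exists_bijOn_Iio_ncard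
  let layer (i : ℕ) := G.filterFromSide s fun u v => num u v = i
  have layer_adj {i : ℕ} {u w : V} (hu : u ∈ s) :
      (layer i).Adj u w ↔ G.Adj u w ∧ num u w = i :=
    h.filterFromSide_adj_iff hu
  have leaf {i : ℕ} {u : V} (hu : u ∈ s) : ((layer i).neighborSet u).Subsingleton := by
    intro w₁ hw₁ w₂ hw₂
    rw [mem_neighborSet, layer_adj hu] at hw₁ hw₂
    exact (hnum u).injOn hw₁.1 hw₂.1 (hw₁.2.trans hw₂.2.symm)
  refine ⟨fun i => layer i, fun i => inf_le_left, fun i => ?_, ?_⟩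
  · refine intervalColorable_of_forall_adj_subsingleton
      (fun v => (G.neighborSet v).toFinite.subset fun w hw => hw.1) fun u v huv => ?_
    rcases huv.2.2 with ⟨hu, -⟩ | ⟨hv, -⟩
    exacts [.inl (leaf hu), .inr (leaf hv)]
  · intro e he
    obtain ⟨u, hu, v, rfl⟩ : ∃ u ∈ s, ∃ v, e = s(u, v) := by
      induction e using Sym2.ind with
      | _ u v =>
        rcases h.mem_of_adj he with ⟨hu, -⟩ | ⟨-, hv⟩
        exacts [⟨u, hu, v, rfl⟩, ⟨v, hv, u, Sym2.eq_swap⟩]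
    have hlt : num u v < D := by
      have := (hnum u).mapsTo he
      rw [mem_Iio, ncard_neighborSet_eq_degree] at this
      exact this.trans_le (hD u hu)
    refine ⟨⟨num u v, hlt⟩, (layer_adj hu).mpr ⟨he, rfl⟩, fun i hi => Fin.ext ?_⟩
    exact ((layer_adj hu).mp hi).2.symm

theorem IsBipartiteWith.intervalThickness_le [G.LocallyFinite] (h : G.IsBipartiteWith s t)
    {D : ℕ} (hD : ∀ v ∈ s, G.degree v ≤ D) : intervalThickness G ≤ D :=
  Nat.sInf_le (h.intervalDecomposition hD)

end SimpleGraph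

theorem bipartite_intervalThickness_le_min_part_maxDegree_general
    {X Y : Type*} [Fintype X] [Fintype Y]
    (G : SimpleGraph (X ⊕ Y)) [DecidableRel G.Adj]
    (hX : ∀ x x' : X, ¬ G.Adj (Sum.inl x) (Sum.inl x'))
    (hY : ∀ y y' : Y, ¬ G.Adj (Sum.inr y) (Sum.inr y')) :
    intervalThickness G ≤
      min (Finset.univ.sup fun x : X => G.degree (Sum.inl x))
        (Finset.univ.sup fun y : Y => G.degree (Sum.inr y)) := by
  have hG : G.IsBipartiteWith (range Sum.inl) (range Sum.inr) :=
    ⟨isCompl_range_inl_range_inr.disjoint, by rintro (x | y) (x' | y') h <;> simp_all⟩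
  refine le_min (hG.intervalThickness_le ?_) (hG.symm.intervalThickness_le ?_)
  · rintro _ ⟨x, rfl⟩
    exact Finset.le_sup (f := fun x : X => G.degree (Sum.inl x)) (Finset.mem_univ x)
  · rintro _ ⟨y, rfl⟩
    exact Finset.le_sup (f := fun y : Y => G.degree (Sum.inr y)) (Finset.mem_univ y)

theorem bipartite_intervalThickness_le_min_part_maxDegree
    {X Y : Type*} [Fintype X] [Fintype Y] [DecidableEq X] [DecidableEq Y]
    (G : SimpleGraph (X ⊕ Y)) [DecidableRel G.Adj]
    (hX : ∀ x x' : X, ¬ G.Adj (Sum.inl x) (Sum.inl x'))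
    (hY : ∀ y y' : Y, ¬ G.Adj (Sum.inr y) (Sum.inr y')) :
    intervalThickness G ≤
      min (Finset.univ.sup fun x : X => G.degree (Sum.inl x))
        (Finset.univ.sup fun y : Y => G.degree (Sum.inr y)) :=
  bipartite_intervalThickness_le_min_part_maxDegree_general G hX hY
end

section
/- If G is a bipartite graph where every vertex has degree 1, 2, or 2r and Δ(G) = 2r, then G has an interval 2r-coloring α such that for each vertex v of degree 2, the set of colors at v is {2i−1, 2i} for some i with 1 ≤ i ≤ r. -/
open SimpleGraph

variable {V : Type*}

/-!
Suppress every vertex of degree 2 by fusing its two edges into one, and pad the resulting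
multigraph to a `2r`-regular one. Splitting off pairs of edges orients it so that every vertex has
in- and out-degree `r`, and `r` applications of Hall's theorem to the bipartite double cover sort
the edges into `r` classes, each entering and leaving every vertex exactly once (Petersen's
2-factor theorem). Undoing the suppressions, the two edges at a vertex of degree 2 become an
entering and a leaving edge of one class. An edge of class `i` gets color `2i+1` or `2i+2`
according to the side of the bipartition containing its tail; as its head lies on the other side,
the entering and the leaving edge of a class at any vertex get the two colors of that class.
-/

namespace Multiset

variable {α β : Type*}

theorem exists_eq_add_of_map_eq_add {f : α → β} {s : Multiset α} {t u : Multiset β}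
    (h : s.map f = t + u) :
    ∃ s₁ s₂, s = s₁ + s₂ ∧ s₁.map f = t ∧ s₂.map f = u := by
  classical
  induction t using Multiset.induction_on generalizing s with
  | empty => exact ⟨0, s, by simp, rfl, by simpa using h⟩
  | cons b t ih =>
    rw [cons_add, ← map_eq_cons] at h
    obtain ⟨a, ha, rfl, hrest⟩ := h
    obtain ⟨s₁, s₂, hs, rfl, rfl⟩ := ih hrest
    exact ⟨a ::ₘ s₁, s₂, by rw [← cons_erase ha, hs, cons_add], by simp, rfl⟩

theorem card_filter_mem_eq_sum_count [DecidableEq β] (f : α → β) (s : Multiset α)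
    (S : Finset β) :
    card (s.filter fun a => f a ∈ S) = ∑ b ∈ S, (s.map f).count b := by
  rw [show s.filter (fun a => f a ∈ S) = s.filter ((· ∈ S) ∘ f) from rfl, ← card_map f,
    ← filter_map, ← sum_count_eq_card (s := S) fun b hb => (mem_filter.mp hb).2]
  exact Finset.sum_congr rfl fun b hb => count_filter_of_pos hb

theorem count_map_last_add_map_castSucc [DecidableEq α] {r : ℕ} {A : Multiset α}
    {B : Multiset (α × Fin r)} (hA : ∀ a, A.count a = 1) (hB : ∀ y, B.count y = 1)
    (x : α × Fin (r + 1)) :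
    (A.map (·, Fin.last r) + B.map (Prod.map id Fin.castSucc)).count x = 1 := by
  obtain ⟨a, i⟩ := x
  induction i using Fin.lastCases with
  | last =>
    rw [count_add, count_map_eq_count' _ _ (Prod.mk_left_injective _), hA, count_eq_zero.mpr]
    simp [Fin.castSucc_ne_last]
  | cast j =>
    rw [count_add, show (a, j.castSucc) = Prod.map id Fin.castSucc (a, j) from rfl,
      count_map_eq_count' _ _ (Function.injective_id.prodMap (Fin.castSucc_injective r)),
      hB, count_eq_zero.mpr]
    simp [(Fin.castSucc_lt_last j).ne']

end Multiset

/-! A multigraph on `V` is a multiset of edges `Sym2 V`, a loop contributing 2 to the degree. An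
orientation of it whose edges are sorted into classes `ι` is a multiset of entries
`((tail, head), class)`. -/

namespace Multigraph

section

variable {ι : Type*} [DecidableEq V]

def degree (m : Multiset (Sym2 V)) (v : V) : ℕ := (m.bind Sym2.toMultiset).count v

omit [DecidableEq V] in
lemma toMultiset_mk (a b : V) : s(a, b).toMultiset = {a, b} := rfl

lemma degree_add (m p : Multiset (Sym2 V)) (v : V) :
    degree (m + p) v = degree m v + degree p v := by
  simp [degree]

lemma degree_cons_mk (a b : V) (m : Multiset (Sym2 V)) (v : V) :
    degree (s(a, b) ::ₘ m) v =
      degree m v + (if v = a then 1 else 0) + (if v = b then 1 else 0) := by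
  simp [degree, toMultiset_mk, Multiset.count_cons]
  omega

lemma degree_map_mk (D : Multiset (V × V)) (v : V) :
    degree (D.map fun p => s(p.1, p.2)) v =
      (D.map Prod.fst).count v + (D.map Prod.snd).count v := by
  induction D using Multiset.induction_on with
  | empty => simp [degree]
  | cons x D ih =>
    rw [Multiset.map_cons, degree_cons_mk, ih]
    simp only [Multiset.map_cons, Multiset.count_cons]
    omega

lemma sum_degree [Fintype V] (m : Multiset (Sym2 V)) :
    ∑ v, degree m v = 2 * Multiset.card m := by
  simp [degree, Multiset.card_bind, Sym2.card_toMultiset, mul_comm]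

def tails (T : Multiset ((V × V) × ι)) : Multiset (V × ι) := T.map fun x => (x.1.1, x.2)

def heads (T : Multiset ((V × V) × ι)) : Multiset (V × ι) := T.map fun x => (x.1.2, x.2)

def undirected (T : Multiset ((V × V) × ι)) : Multiset (Sym2 V) := T.map fun x => s(x.1.1, x.1.2)

/-- Every class is a disjoint union of directed paths and cycles. -/
def IsLinear (T : Multiset ((V × V) × ι)) : Prop := (tails T).Nodup ∧ (heads T).Nodup

lemma degree_undirected (T : Multiset ((V × V) × ι)) (v : V) :
    degree (undirected T) v =
      ((tails T).map Prod.fst).count v + ((heads T).map Prod.fst).count v := by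
  simpa [undirected, tails, heads, Multiset.map_map, Function.comp_def] using
    degree_map_mk (T.map Prod.fst) v

lemma notMem_tails_of_degree_eq_zero {T : Multiset ((V × V) × ι)} {v : V}
    (h : degree (undirected T) v = 0) (i : ι) : (v, i) ∉ tails T := fun hi => by
  rw [degree_undirected] at h
  exact Multiset.count_eq_zero.mp (Nat.eq_zero_of_add_eq_zero_right h)
    (Multiset.mem_map_of_mem Prod.fst hi)

lemma notMem_heads_of_degree_eq_zero {T : Multiset ((V × V) × ι)} {v : V}
    (h : degree (undirected T) v = 0) (i : ι) : (v, i) ∉ heads T := fun hi => by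
  rw [degree_undirected] at h
  exact Multiset.count_eq_zero.mp (Nat.eq_zero_of_add_eq_zero_left h)
    (Multiset.mem_map_of_mem Prod.fst hi)

lemma exists_eq_cons_of_degree_pos {m : Multiset (Sym2 V)} {v : V} (h : 0 < degree m v) :
    ∃ a m₀, m = s(v, a) ::ₘ m₀ := by
  obtain ⟨e, he, hve⟩ := Multiset.mem_bind.mp (Multiset.count_pos.mp h)
  obtain ⟨a, rfl⟩ := Sym2.mem_iff_exists.mp (Sym2.mem_toMultiset.mp hve)
  exact ⟨a, Multiset.exists_cons_of_mem he⟩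

lemma exists_loop_or_path {m : Multiset (Sym2 V)} {v : V} (h : 2 ≤ degree m v) :
    (∃ m₀, m = s(v, v) ::ₘ m₀) ∨ ∃ a b m₀, m = s(a, v) ::ₘ s(v, b) ::ₘ m₀ := by
  obtain ⟨a, m₁, rfl⟩ := exists_eq_cons_of_degree_pos (m := m) (v := v) (by omega)
  by_cases hav : a = v
  · exact Or.inl ⟨m₁, by rw [hav]⟩
  rw [degree_cons_mk, if_pos rfl, if_neg (Ne.symm hav)] at h
  obtain ⟨b, m₀, rfl⟩ := exists_eq_cons_of_degree_pos (m := m₁) (v := v) (by omega)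
  exact Or.inr ⟨a, b, m₀, by rw [Sym2.eq_swap]⟩

lemma exists_lift_path {a b v : V} {m₀ : Multiset (Sym2 V)} {T' : Multiset ((V × V) × ι)}
    (h : undirected T' = s(a, b) ::ₘ m₀) :
    ∃ i T, undirected T = s(a, v) ::ₘ s(v, b) ::ₘ m₀ ∧
      tails T = (v, i) ::ₘ tails T' ∧ heads T = (v, i) ::ₘ heads T' := by
  classical
  obtain ⟨⟨⟨p, q⟩, i⟩, hx, hpq, hrest⟩ := (Multiset.map_eq_cons _ _ _ _).mpr h
  dsimp only at hpq
  rw [← Multiset.cons_erase hx]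
  refine ⟨i, ((p, v), i) ::ₘ ((v, q), i) ::ₘ T'.erase ((p, q), i), ?_, ?_, ?_⟩
  · simp only [undirected, Multiset.map_cons] at hrest ⊢
    rw [hrest]
    rcases Sym2.eq_iff.mp hpq with ⟨rfl, rfl⟩ | ⟨rfl, rfl⟩
    · rfl
    · rw [Multiset.cons_swap, Sym2.eq_swap (a := v) (b := p), Sym2.eq_swap (a := q) (b := v)]
  · simp only [tails, Multiset.map_cons]
    exact Multiset.cons_swap _ _ _
  · simp only [heads, Multiset.map_cons]

/-- Splitting off at `v`: `m'` fuses two edges at `v` into one (or deletes a loop at `v`). -/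
lemma exists_splitOff {m : Multiset (Sym2 V)} {v : V} (h : 2 ≤ degree m v) (i₀ : ι) :
    ∃ m', Multiset.card m' < Multiset.card m ∧
      (∀ w, degree m w = degree m' w + if w = v then 2 else 0) ∧
      ∀ T' : Multiset ((V × V) × ι), undirected T' = m' →
        ∃ i T, undirected T = m ∧
          tails T = (v, i) ::ₘ tails T' ∧ heads T = (v, i) ::ₘ heads T' := by
  rcases exists_loop_or_path h with ⟨m₀, rfl⟩ | ⟨a, b, m₀, rfl⟩
  · refine ⟨m₀, by simp, fun w => ?_, fun T' hT' => ⟨i₀, ((v, v), i₀) ::ₘ T', ?_⟩⟩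
    · rw [degree_cons_mk]
      split_ifs <;> omega
    · simp [undirected, tails, heads, ← hT']
  · refine ⟨s(a, b) ::ₘ m₀, by simp, fun w => ?_, fun T' hT' => exists_lift_path hT'⟩
    simp only [degree_cons_mk]
    split_ifs <;> omega

theorem exists_balanced_orientation (m : Multiset (Sym2 V)) (h : ∀ v, Even (degree m v)) :
    ∃ D : Multiset (V × V),
      D.map (fun p => s(p.1, p.2)) = m ∧ D.map Prod.fst = D.map Prod.snd := by
  induction hn : Multiset.card m using Nat.strong_induction_on generalizing m with
  | _ n ih =>
  rcases Multiset.empty_or_exists_mem m with rfl | ⟨e, he⟩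
  · exact ⟨0, rfl, rfl⟩
  obtain ⟨v, hv⟩ : ∃ v, v ∈ e := ⟨e.out.1, Sym2.out_fst_mem e⟩
  have hpos : 0 < degree m v :=
    Multiset.count_pos.mpr (Multiset.mem_bind.mpr ⟨e, he, Sym2.mem_toMultiset.mpr hv⟩)
  obtain ⟨k, hk⟩ := h v
  obtain ⟨m', hcard, hdeg, hlift⟩ := exists_splitOff (m := m) (v := v) (by omega) ()
  obtain ⟨D', hD'm, hD'⟩ := ih _ (hn ▸ hcard) m' (fun w => by
    have := h w
    rw [hdeg w] at this
    split_ifs at this <;> simpa [Nat.even_add] using this) rfl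
  -- lift through a single class, keeping only the orientation
  obtain ⟨_, T, hT, htails, hheads⟩ := hlift (D'.map fun p => (p, ()))
    (by simpa [undirected, Multiset.map_map] using hD'm)
  refine ⟨T.map Prod.fst, by simpa [undirected, Multiset.map_map] using hT, ?_⟩
  have h₁ := congrArg (Multiset.map Prod.fst) htails
  have h₂ := congrArg (Multiset.map Prod.fst) hheads
  simp only [tails, heads, Multiset.map_map, Multiset.map_cons, Function.comp_def] at h₁ h₂
  simp only [Multiset.map_map, Function.comp_def, h₁, h₂]
  exact congrArg _ hD'

omit [DecidableEq V] in
lemma exists_bind_toMultiset_eq (M : Multiset V) (h : Even (Multiset.card M)) :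
    ∃ p : Multiset (Sym2 V), p.bind Sym2.toMultiset = M := by
  induction hn : Multiset.card M using Nat.strong_induction_on generalizing M with
  | _ n ih =>
  rcases Multiset.empty_or_exists_mem M with rfl | ⟨a, ha⟩
  · exact ⟨0, rfl⟩
  obtain ⟨M₁, rfl⟩ := Multiset.exists_cons_of_mem ha
  obtain ⟨b, hb⟩ := Multiset.card_pos_iff_exists_mem.mp (by
    rw [Multiset.card_cons] at h
    obtain ⟨k, hk⟩ := h
    omega : 0 < Multiset.card M₁)
  obtain ⟨M₂, rfl⟩ := Multiset.exists_cons_of_mem hb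
  simp only [Multiset.card_cons] at h hn
  obtain ⟨p, hp⟩ :=
    ih (Multiset.card M₂) (by omega) M₂ (by simpa [Nat.even_add_one] using h) rfl
  exact ⟨s(a, b) ::ₘ p, by simp [hp, toMultiset_mk]⟩

theorem exists_degree_add_eq [Fintype V] (m : Multiset (Sym2 V)) {r : ℕ}
    (h : ∀ v, degree m v ≤ 2 * r) : ∃ p, ∀ v, degree (m + p) v = 2 * r := by
  set M := Finsupp.toMultiset (Finsupp.equivFunOnFinite.symm fun v => 2 * r - degree m v)
  have hM : ∀ v, M.count v = 2 * r - degree m v := by simp [M]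
  have hcard : Multiset.card M + 2 * Multiset.card m = 2 * r * Fintype.card V := by
    rw [← Multiset.sum_count_eq_card (s := Finset.univ) (fun _ _ => Finset.mem_univ _),
      ← sum_degree, ← Finset.sum_add_distrib]
    simp only [hM]
    rw [Finset.sum_congr rfl fun v _ => Nat.sub_add_cancel (h v)]
    simp [mul_comm]
  obtain ⟨p, hp⟩ := exists_bind_toMultiset_eq M ⟨r * Fintype.card V - Multiset.card m, by
    rw [mul_assoc] at hcard; omega⟩
  refine ⟨p, fun v => ?_⟩
  rw [degree_add, show degree p v = M.count v by rw [degree, hp], hM, Nat.add_sub_cancel' (h v)]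

lemma exists_perfectMatching_le [Fintype V] {r : ℕ} (hr : 0 < r) {D : Multiset (V × V)}
    (hout : ∀ v, (D.map Prod.fst).count v = r) (hin : ∀ v, (D.map Prod.snd).count v = r) :
    ∃ M ≤ D, (∀ v, (M.map Prod.fst).count v = 1) ∧ ∀ v, (M.map Prod.snd).count v = 1 := by
  let t : V → Finset V := fun v => ((D.filter (·.1 = v)).map Prod.snd).toFinset
  have ht : ∀ v w, w ∈ t v ↔ (v, w) ∈ D := by
    intro v w
    simp only [t, Multiset.mem_toFinset, Multiset.mem_map, Multiset.mem_filter]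
    exact ⟨fun ⟨_, ⟨hx, hxv⟩, hxw⟩ => hxv ▸ hxw ▸ hx,
      fun h => ⟨(v, w), ⟨h, rfl⟩, rfl⟩⟩
  obtain ⟨g, hg, hgD⟩ := (Finset.all_card_le_biUnion_card_iff_exists_injective t).mp fun S => by
    refine Nat.le_of_mul_le_mul_left ?_ hr
    calc r * S.card = Multiset.card (D.filter fun x => x.1 ∈ S) := by
          simp [Multiset.card_filter_mem_eq_sum_count, hout, mul_comm]
      _ ≤ Multiset.card (D.filter fun x => x.2 ∈ S.biUnion t) := by
          refine Multiset.card_le_card (Multiset.le_filter.mpr ⟨Multiset.filter_le _ _, ?_⟩)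
          intro x hx
          obtain ⟨hxD, hxS⟩ := Multiset.mem_filter.mp hx
          exact Finset.mem_biUnion.mpr ⟨x.1, hxS, (ht _ _).mpr hxD⟩
      _ = r * (S.biUnion t).card := by
          rw [Multiset.card_filter_mem_eq_sum_count]
          simp [hin, mul_comm]
  have hnodup : (Finset.univ.val.map fun v => (v, g v)).Nodup :=
    Finset.univ.nodup.map fun _ _ h => congrArg Prod.fst h
  refine ⟨_, (Multiset.le_iff_subset hnodup).mpr fun x hx => ?_, fun v => ?_, fun v => ?_⟩
  · obtain ⟨v, -, rfl⟩ := Multiset.mem_map.mp hx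
    exact (ht _ _).mp (hgD v)
  · simp [Multiset.map_map]
  · obtain ⟨u, rfl⟩ := (Finite.injective_iff_surjective.mp hg) v
    simpa [Multiset.map_map, Function.comp_def] using
      Multiset.count_eq_one_of_mem (Finset.univ.nodup.map hg)
        (Multiset.mem_map_of_mem g (Finset.mem_univ u))

theorem exists_factorization_of_regular [Fintype V] (r : ℕ) (D : Multiset (V × V))
    (hout : ∀ v, (D.map Prod.fst).count v = r) (hin : ∀ v, (D.map Prod.snd).count v = r) :
    ∃ T : Multiset ((V × V) × Fin r), T.map Prod.fst = D ∧
      ∀ x, (tails T).count x = 1 ∧ (heads T).count x = 1 := by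
  induction r generalizing D with
  | zero =>
    refine ⟨0, (Multiset.eq_zero_of_forall_notMem fun x hx => ?_).symm, fun x => x.2.elim0⟩
    exact Multiset.count_eq_zero.mp (hout x.1) (Multiset.mem_map_of_mem _ hx)
  | succ r ih =>
    obtain ⟨M, hMD, hMout, hMin⟩ := exists_perfectMatching_le r.succ_pos hout hin
    obtain ⟨D₀, rfl⟩ := Multiset.le_iff_exists_add.mp hMD
    have hD₀ : ∀ v, (D₀.map Prod.fst).count v = r ∧ (D₀.map Prod.snd).count v = r := by
      intro v
      have := hout v
      have := hin v
      simp only [Multiset.map_add, Multiset.count_add, hMout, hMin] at *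
      omega
    obtain ⟨T₀, rfl, hT₀⟩ := ih D₀ (fun v => (hD₀ v).1) (fun v => (hD₀ v).2)
    refine ⟨M.map (·, Fin.last r) + T₀.map (Prod.map id Fin.castSucc),
      by simp [Multiset.map_map], fun x => ⟨?_, ?_⟩⟩
    · convert Multiset.count_map_last_add_map_castSucc hMout (fun y => (hT₀ y).1) x using 2
      simp [tails, Multiset.map_map]
    · convert Multiset.count_map_last_add_map_castSucc hMin (fun y => (hT₀ y).2) x using 2
      simp [heads, Multiset.map_map]

theorem exists_linear_of_degree_le [Fintype V] {r : ℕ} (m : Multiset (Sym2 V))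
    (h : ∀ v, degree m v ≤ 2 * r) :
    ∃ T : Multiset ((V × V) × Fin r), undirected T = m ∧ IsLinear T ∧
      ∀ v, degree m v = 2 * r → ∀ i, (v, i) ∈ tails T ∧ (v, i) ∈ heads T := by
  obtain ⟨p, hp⟩ := exists_degree_add_eq m h
  obtain ⟨D, hDm, hD⟩ := exists_balanced_orientation (m + p) fun v => by
    rw [hp]; exact even_two_mul r
  have hcount : ∀ v, (D.map Prod.fst).count v = r ∧ (D.map Prod.snd).count v = r := by
    intro v
    have := degree_map_mk D v
    rw [hDm, hp, ← hD] at this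
    rw [← hD]
    omega
  obtain ⟨T, hTD, hT⟩ := exists_factorization_of_regular r D (fun v => (hcount v).1)
    (fun v => (hcount v).2)
  obtain ⟨T₁, T₂, rfl, hT₁, hT₂⟩ := Multiset.exists_eq_add_of_map_eq_add
    (f := fun x => s(x.1.1, x.1.2)) (s := T) (by rw [← hDm, ← hTD, Multiset.map_map]; rfl)
  have hpv : ∀ v, degree m v = 2 * r → degree p v = 0 := fun v hv => by
    have := hp v
    rw [degree_add] at this
    omega
  simp only [tails, heads, Multiset.map_add] at hT
  refine ⟨T₁, hT₁, ⟨?_, ?_⟩, fun v hv i => ⟨?_, ?_⟩⟩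
  · exact Multiset.nodup_of_le (Multiset.le_add_right _ _)
      (Multiset.nodup_iff_count_le_one.mpr fun x => (hT x).1.le)
  · exact Multiset.nodup_of_le (Multiset.le_add_right _ _)
      (Multiset.nodup_iff_count_le_one.mpr fun x => (hT x).2.le)
  · exact (Multiset.mem_add.mp (Multiset.count_pos.mp ((hT (v, i)).1 ▸ one_pos))).resolve_right
      (notMem_tails_of_degree_eq_zero (by rw [undirected, hT₂, hpv v hv]) i)
  · exact (Multiset.mem_add.mp (Multiset.count_pos.mp ((hT (v, i)).2 ▸ one_pos))).resolve_right
      (notMem_heads_of_degree_eq_zero (by rw [undirected, hT₂, hpv v hv]) i)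

theorem exists_linear_one_class_at_degree_two [Fintype V] {r : ℕ} (hr : 0 < r)
    (m : Multiset (Sym2 V)) (h : ∀ v, degree m v ≤ 2 * r) :
    ∃ T : Multiset ((V × V) × Fin r), undirected T = m ∧ IsLinear T ∧
      (∀ v, degree m v = 2 * r → ∀ i, (v, i) ∈ tails T ∧ (v, i) ∈ heads T) ∧
      ∀ v, degree m v = 2 →
        ∃ i, ∀ j, ((v, j) ∈ tails T ↔ j = i) ∧ ((v, j) ∈ heads T ↔ j = i) := by
  induction hn : Multiset.card m using Nat.strong_induction_on generalizing m with
  | _ n ih =>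
  by_cases hsplit : ∃ v, degree m v = 2 ∧ r ≠ 1
  swap
  · push Not at hsplit
    obtain ⟨T, hT, hlin, hfull⟩ := exists_linear_of_degree_le m h
    refine ⟨T, hT, hlin, hfull, fun v hv => ⟨⟨0, hr⟩, fun j => ?_⟩⟩
    obtain rfl := hsplit v hv
    simpa [Subsingleton.elim j ⟨0, hr⟩] using hfull v hv j
  obtain ⟨v, hv, hr1⟩ := hsplit
  obtain ⟨m', hcard, hdeg, hlift⟩ :=
    exists_splitOff (m := m) (v := v) hv.ge (⟨0, hr⟩ : Fin r)
  have hv' : degree m' v = 0 := by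
    have := hdeg v
    rw [if_pos rfl] at this
    omega
  have hdeg' : ∀ w, w ≠ v → degree m' w = degree m w := fun w hw => by
    rw [hdeg w, if_neg hw, add_zero]
  obtain ⟨T', rfl, ⟨htails', hheads'⟩, hfull', hpair'⟩ := ih _ (hn ▸ hcard) m'
    (fun w => (Nat.le_add_right _ _).trans ((hdeg w).symm.le.trans (h w))) rfl
  obtain ⟨i, T, hT, htails, hheads⟩ := hlift T' rfl
  have hnt := notMem_tails_of_degree_eq_zero hv'
  have hnh := notMem_heads_of_degree_eq_zero hv'
  refine ⟨T, hT, ⟨htails ▸ Multiset.nodup_cons.mpr ⟨hnt i, htails'⟩,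
    hheads ▸ Multiset.nodup_cons.mpr ⟨hnh i, hheads'⟩⟩, fun w hw j => ?_, fun w hw => ?_⟩
  · have hwv : w ≠ v := by
      rintro rfl
      omega
    rw [htails, hheads]
    have := hfull' w (by rw [hdeg' w hwv]; exact hw) j
    exact ⟨Multiset.mem_cons_of_mem this.1, Multiset.mem_cons_of_mem this.2⟩
  · by_cases hwv : w = v
    · subst hwv
      refine ⟨i, fun j => ?_⟩
      simp [htails, hheads, hnt, hnh]
    · obtain ⟨k, hk⟩ := hpair' w (by rw [hdeg' w hwv]; exact hw)
      refine ⟨k, fun j => ?_⟩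
      simpa [htails, hheads, hwv] using hk j

theorem degree_edgeFinset [Fintype V] (G : SimpleGraph V) [DecidableRel G.Adj] (v : V) :
    degree G.edgeFinset.val v = G.degree v := by
  rw [← G.card_incidenceFinset_eq_degree, G.incidenceFinset_eq_filter, Finset.card_filter,
    degree, Multiset.count_bind]
  refine Finset.sum_congr rfl fun e he => ?_
  induction e using Sym2.ind with
  | _ a b =>
  have hab : a ≠ b := G.ne_of_adj (SimpleGraph.mem_edgeFinset.mp he)
  by_cases hva : v = a <;> by_cases hvb : v = b <;>
    simp_all [toMultiset_mk]

end

variable {r : ℕ}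

/-- Class `i` uses colors `2i+1` and `2i+2`; which one an edge gets depends on the side of its
tail, so that at every vertex an entering and a leaving edge of the same class differ. -/
def pathColor (C : V → Fin 2) (x : (V × V) × Fin r) : ℕ := 2 * x.2 + 1 + C x.1.1

open Classical in
noncomputable def edgeColoring (C : V → Fin 2) (T : Multiset ((V × V) × Fin r)) (e : Sym2 V) :
    ℕ :=
  if h : ∃ x ∈ T, s(x.1.1, x.1.2) = e then pathColor C h.choose else 0

section Graph

variable [Fintype V] {G : SimpleGraph V} [DecidableRel G.Adj] (C : G.Coloring (Fin 2))
  {T : Multiset ((V × V) × Fin r)} (hT : undirected T = G.edgeFinset.val)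
include hT

lemma edgeColoring_mk {x : (V × V) × Fin r} (hx : x ∈ T) :
    edgeColoring C T s(x.1.1, x.1.2) = pathColor C x := by
  have h : ∃ y ∈ T, s(y.1.1, y.1.2) = s(x.1.1, x.1.2) := ⟨x, hx, rfl⟩
  rw [edgeColoring, dif_pos h]
  congr 1
  exact Multiset.inj_on_of_nodup_map (hT ▸ G.edgeFinset.nodup) _ h.choose_spec.1 _ hx
    h.choose_spec.2

lemma exists_mem_of_mem_edgeSet {e : Sym2 V} (he : e ∈ G.edgeSet) :
    ∃ x ∈ T, s(x.1.1, x.1.2) = e :=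
  Multiset.mem_map.mp (show e ∈ undirected T by rw [hT]; exact SimpleGraph.mem_edgeFinset.mpr he)

lemma adj_of_mem {x : (V × V) × Fin r} (hx : x ∈ T) : G.Adj x.1.1 x.1.2 := by
  rw [← SimpleGraph.mem_edgeSet, ← SimpleGraph.mem_edgeFinset, Finset.mem_def, ← hT]
  exact Multiset.mem_map_of_mem _ hx

lemma pathColor_of_snd_eq {x : (V × V) × Fin r} (hx : x ∈ T) {v : V} (hv : x.1.2 = v) :
    pathColor C x = 2 * x.2 + 2 - C v := by
  have hne := Fin.val_ne_of_ne (C.valid (adj_of_mem hT hx))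
  have := (C x.1.1).isLt
  have := (C x.1.2).isLt
  subst hv
  unfold pathColor
  omega

lemma mem_colorsAt_iff {v : V} {n : ℕ} :
    n ∈ colorsAt G (edgeColoring C T) v ↔
      ∃ i, ((v, i) ∈ tails T ∧ n = 2 * i + 1 + C v) ∨
        ((v, i) ∈ heads T ∧ n = 2 * i + 2 - C v) := by
  constructor
  · rintro ⟨e, he, hve, rfl⟩
    obtain ⟨x, hx, rfl⟩ := exists_mem_of_mem_edgeSet hT he
    rw [edgeColoring_mk C hT hx]
    rcases Sym2.mem_iff.mp hve with h | h
    · exact ⟨x.2, Or.inl ⟨Multiset.mem_map.mpr ⟨x, hx, by rw [h]⟩,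
        by rw [pathColor, h]⟩⟩
    · exact ⟨x.2, Or.inr ⟨Multiset.mem_map.mpr ⟨x, hx, by rw [h]⟩,
        pathColor_of_snd_eq C hT hx h.symm⟩⟩
  · rintro ⟨i, ⟨hi, rfl⟩ | ⟨hi, rfl⟩⟩
    · obtain ⟨x, hx, hxv⟩ := Multiset.mem_map.mp hi
      simp only [Prod.mk.injEq] at hxv
      refine ⟨s(x.1.1, x.1.2), adj_of_mem hT hx, hxv.1 ▸ Sym2.mem_mk_left _ _, ?_⟩
      rw [edgeColoring_mk C hT hx, pathColor, hxv.1, hxv.2]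
    · obtain ⟨x, hx, hxv⟩ := Multiset.mem_map.mp hi
      simp only [Prod.mk.injEq] at hxv
      refine ⟨s(x.1.1, x.1.2), adj_of_mem hT hx, hxv.1 ▸ Sym2.mem_mk_right _ _, ?_⟩
      rw [edgeColoring_mk C hT hx, pathColor_of_snd_eq C hT hx hxv.1, hxv.2]

lemma isProperEdgeColoring_edgeColoring (hlin : IsLinear T) :
    IsProperEdgeColoring G (edgeColoring C T) := by
  rintro _ he₁ _ he₂ hne ⟨v, hv₁, hv₂⟩ hc
  obtain ⟨x, hx, rfl⟩ := exists_mem_of_mem_edgeSet hT he₁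
  obtain ⟨y, hy, rfl⟩ := exists_mem_of_mem_edgeSet hT he₂
  rw [edgeColoring_mk C hT hx, edgeColoring_mk C hT hy] at hc
  have hxy : x ≠ y := by
    rintro rfl
    exact hne rfl
  have := (C x.1.1).isLt
  have := (C y.1.1).isLt
  have hclass : x.2 = y.2 := Fin.ext (by unfold pathColor at hc; omega)
  have hside : C x.1.1 = C y.1.1 := Fin.ext (by unfold pathColor at hc; omega)
  rcases Sym2.mem_iff.mp hv₁ with rfl | rfl <;> rcases Sym2.mem_iff.mp hv₂ with h | h
  · exact hxy (Multiset.inj_on_of_nodup_map hlin.1 _ hx _ hy (Prod.ext h hclass))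
  · exact C.valid (adj_of_mem hT hy) (hside.symm.trans (congrArg C h))
  · exact C.valid (adj_of_mem hT hx) (hside.trans (congrArg C h).symm)
  · exact hxy (Multiset.inj_on_of_nodup_map hlin.2 _ hx _ hy (Prod.ext h hclass))

lemma edgeColoring_mem_Icc {e : Sym2 V} (he : e ∈ G.edgeSet) :
    1 ≤ edgeColoring C T e ∧ edgeColoring C T e ≤ 2 * r := by
  obtain ⟨x, hx, rfl⟩ := exists_mem_of_mem_edgeSet hT he
  rw [edgeColoring_mk C hT hx, pathColor]
  have := x.2.isLt
  have := (C x.1.1).isLt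
  omega

lemma colorsAt_eq_Icc {v : V} (hv : ∀ i, (v, i) ∈ tails T ∧ (v, i) ∈ heads T) :
    colorsAt G (edgeColoring C T) v = Set.Icc 1 (2 * r) := by
  have := (C v).isLt
  ext n
  rw [mem_colorsAt_iff C hT, Set.mem_Icc]
  constructor
  · rintro ⟨i, ⟨-, rfl⟩ | ⟨-, rfl⟩⟩ <;> have := i.isLt <;> omega
  · rintro ⟨h₁, h₂⟩
    refine ⟨⟨(n - 1) / 2, by omega⟩, ?_⟩
    obtain ⟨htail, hhead⟩ := hv ⟨(n - 1) / 2, by omega⟩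
    by_cases hn : n = 2 * ((n - 1) / 2) + 1 + C v
    · exact Or.inl ⟨htail, hn⟩
    · exact Or.inr ⟨hhead, by dsimp only; omega⟩

lemma colorsAt_eq_pair {v : V} {i : Fin r}
    (hv : ∀ j, ((v, j) ∈ tails T ↔ j = i) ∧ ((v, j) ∈ heads T ↔ j = i)) :
    colorsAt G (edgeColoring C T) v = {2 * (i : ℕ) + 1, 2 * (i : ℕ) + 2} := by
  have := (C v).isLt
  ext n
  simp only [mem_colorsAt_iff C hT, (hv _).1, (hv _).2, Set.mem_insert_iff, Set.mem_singleton_iff]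
  constructor
  · rintro ⟨j, ⟨rfl, rfl⟩ | ⟨rfl, rfl⟩⟩ <;> omega
  · intro hn
    exact ⟨i, by omega⟩

end Graph

end Multigraph

theorem SimpleGraph.exists_colorsAt_eq_singleton_of_degree_eq_one (G : SimpleGraph V)
    (c : Sym2 V → ℕ) {v : V} [Fintype (G.neighborSet v)] (hv : G.degree v = 1) :
    ∃ n, colorsAt G c v = {n} := by
  obtain ⟨w, hw, huniq⟩ := degree_eq_one_iff_existsUnique_adj.mp hv
  refine ⟨c s(v, w),
    Set.eq_singleton_iff_unique_mem.mpr ⟨⟨_, hw, Sym2.mem_mk_left v w, rfl⟩, ?_⟩⟩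
  rintro n ⟨e, he, hve, rfl⟩
  obtain ⟨u, rfl⟩ := Sym2.mem_iff_exists.mp hve
  rw [huniq u he]

theorem Set.ordConnected_pair_add_one (n : ℕ) : ({n, n + 1} : Set ℕ).OrdConnected := by
  refine ⟨?_⟩
  rintro a (rfl | rfl) b (rfl | rfl) k ⟨h₁, h₂⟩ <;>
    simp only [Set.mem_insert_iff, Set.mem_singleton_iff] <;> omega

theorem bipartite_degrees_one_two_even_interval_coloring_general [Fintype V]
    (G : SimpleGraph V) [DecidableRel G.Adj] (r : ℕ) (hr : 1 ≤ r)
    (hbip : G.Colorable 2)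
    (hdeg : ∀ v, G.degree v = 1 ∨ G.degree v = 2 ∨ G.degree v = 2 * r) :
    ∃ c, IsIntervalColoring G c ∧ (∀ e ∈ G.edgeSet, c e ≤ 2 * r) ∧
      ∀ v, G.degree v = 2 →
        ∃ i, 1 ≤ i ∧ i ≤ r ∧ colorsAt G c v = {2 * i - 1, 2 * i} := by
  classical
  obtain ⟨C⟩ := hbip
  have hdeg' := Multigraph.degree_edgeFinset G
  obtain ⟨T, hT, hlin, hfull, hpair⟩ :=
    Multigraph.exists_linear_one_class_at_degree_two hr G.edgeFinset.val fun v => by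
      rw [hdeg']; rcases hdeg v with h | h | h <;> omega
  set c := Multigraph.edgeColoring C T
  have hinterval : ∀ v, (colorsAt G c v).OrdConnected := fun v => by
    rcases hdeg v with h | h | h
    · obtain ⟨n, hn⟩ := G.exists_colorsAt_eq_singleton_of_degree_eq_one c h
      exact hn ▸ Set.ordConnected_singleton
    · obtain ⟨i, hi⟩ := hpair v (by rwa [hdeg'])
      exact Multigraph.colorsAt_eq_pair C hT hi ▸ Set.ordConnected_pair_add_one _
    · exact Multigraph.colorsAt_eq_Icc C hT (hfull v (by rwa [hdeg'])) ▸ Set.ordConnected_Icc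
  refine ⟨c, ⟨Multigraph.isProperEdgeColoring_edgeColoring C hT hlin,
    fun e he => (Multigraph.edgeColoring_mem_Icc C hT he).1,
    fun v a ha b hb k hak hkb => (hinterval v).out ha hb ⟨hak, hkb⟩⟩,
    fun e he => (Multigraph.edgeColoring_mem_Icc C hT he).2, fun v hv => ?_⟩
  obtain ⟨i, hi⟩ := hpair v (by rwa [hdeg'])
  refine ⟨i + 1, by omega, i.isLt, ?_⟩
  rw [Multigraph.colorsAt_eq_pair C hT hi]
  congr 1

theorem bipartite_degrees_one_two_even_interval_coloring [Fintype V] [DecidableEq V]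
    (G : SimpleGraph V) [DecidableRel G.Adj] (r : ℕ) (hr : 1 ≤ r)
    (hbip : G.Colorable 2) (hdelta : G.maxDegree = 2 * r)
    (hdeg : ∀ v, G.degree v = 1 ∨ G.degree v = 2 ∨ G.degree v = 2 * r) :
    ∃ c, IsIntervalColoring G c ∧ (∀ e ∈ G.edgeSet, c e ≤ 2 * r) ∧
      ∀ v, G.degree v = 2 →
        ∃ i, 1 ≤ i ∧ i ≤ r ∧ colorsAt G c v = {2 * i - 1, 2 * i} :=
  bipartite_degrees_one_two_even_interval_coloring_general G r hr hbip hdeg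
end
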